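/- arXiv:2202.02831 — 4 statements merged into one kernel-verified Lean document; each statement's English description precedes it below -/
import Mathlib

section
/- Let L(u,v) = (1/2)·v²·‖u‖² be the widening valley loss on ℝ^{d+1} (u ∈ ℝ^d, v ∈ ℝ). Fix α ∈ (0,1), D > 0, initialize at w₀ = (u₀, 0) with ‖u₀‖² = D, take step size η = α/(2D), and let the i.i.d. variables ξ_n have independent coordinates that are symmetric Bernoulli with values ±σ, where 0 < σ² ≤ min{α³D/2, D/(8α), αD/(2d)}. Consider the Anti-PGD iterates w_{n+1} = w_n − η ∇L(w_n) + (ξ_{n+1} − ξ_n) and write w_n = (u_n, v_n). Then, for any d ∈ ℕ, if the iterates satisfy ‖u_n‖² ∈ (αD, D/α) for all n, one has lim_{n→∞} E[‖u_n‖²] ≤ αD. -/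
open MeasureTheory ProbabilityTheory Filter

noncomputable def apgdUV (d : ℕ) (η : ℝ) (u0 : Fin d → ℝ) :
    ℕ → ((ℕ × Fin (d + 1)) → ℝ) → (Fin d → ℝ) × ℝ
  | 0, _ => (u0, 0)
  | n + 1, x =>
    (fun i => (1 - η * (apgdUV d η u0 n x).2 ^ 2) * (apgdUV d η u0 n x).1 i
        + (x (n + 1, i.castSucc) - x (n, i.castSucc)),
     (1 - η * (∑ i, ((apgdUV d η u0 n x).1 i) ^ 2)) * (apgdUV d η u0 n x).2
        + (x (n + 1, Fin.last d) - x (n, Fin.last d)))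

lemma apgdUV_measurable (d : ℕ) (η : ℝ) (u0 : Fin d → ℝ) (n : ℕ) :
    (∀ i, Measurable fun x => (apgdUV d η u0 n x).1 i)
      ∧ Measurable fun x => (apgdUV d η u0 n x).2 := by
  induction n with
  | zero => exact ⟨fun i => measurable_const, measurable_const⟩
  | succ n ih =>
    obtain ⟨ihU, ihV⟩ := ih
    constructor
    · intro i
      simp only [apgdUV]
      exact (((measurable_const.sub (measurable_const.mul (ihV.pow_const 2))).mul (ihU i)).add
        ((measurable_pi_apply _).sub (measurable_pi_apply _)))
    · simp only [apgdUV]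
      have hsum : Measurable fun x => ∑ i, ((apgdUV d η u0 n x).1 i) ^ 2 :=
        Finset.measurable_sum _ fun i _ => (ihU i).pow_const 2
      exact (((measurable_const.sub (measurable_const.mul hsum)).mul ihV).add
        ((measurable_pi_apply _).sub (measurable_pi_apply _)))

lemma apgdUV_congr (d : ℕ) (η : ℝ) (u0 : Fin d → ℝ) (n : ℕ) (x y : (ℕ × Fin (d + 1)) → ℝ)
    (h : ∀ p : ℕ × Fin (d + 1), p.1 < n → x p = y p) :
    ((x (n, Fin.last d) = y (n, Fin.last d) → (apgdUV d η u0 n x).2 = (apgdUV d η u0 n y).2)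
      ∧ ((∀ i : Fin d, x (n, i.castSucc) = y (n, i.castSucc)) →
          (apgdUV d η u0 n x).1 = (apgdUV d η u0 n y).1)) := by
  induction n with
  | zero => simp [apgdUV]
  | succ n ih =>
    have hlt : ∀ p : ℕ × Fin (d + 1), p.1 < n → x p = y p :=
      fun p hp => h p (hp.trans (Nat.lt_succ_self n))
    obtain ⟨ihV, ihU⟩ := ih hlt
    have hVn : (apgdUV d η u0 n x).2 = (apgdUV d η u0 n y).2 :=
      ihV (h _ (Nat.lt_succ_self n))
    have hUn : (apgdUV d η u0 n x).1 = (apgdUV d η u0 n y).1 :=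
      ihU (fun i => h _ (Nat.lt_succ_self n))
    constructor
    · intro hlast
      simp only [apgdUV, hVn, hUn, hlast, h (n, Fin.last d) (Nat.lt_succ_self n)]
    · intro hcs
      funext i
      simp only [apgdUV, hVn, hUn, hcs i, h (n, i.castSucc) (Nat.lt_succ_self n)]

lemma integrable_of_ae_bound' {Ω : Type*} [MeasurableSpace Ω] {μ : Measure Ω}
    [IsProbabilityMeasure μ] {f : Ω → ℝ} (hm : AEStronglyMeasurable f μ) {C : ℝ}
    (h : ∀ᵐ ω ∂μ, |f ω| ≤ C) : Integrable f μ :=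
  memLp_one_iff_integrable.mp (MemLp.of_bound hm C (by simpa [Real.norm_eq_abs] using h))

lemma bern_int {Ω : Type*} [MeasurableSpace Ω] {μ : Measure Ω} [IsProbabilityMeasure μ]
    {σ : ℝ} {f : Ω → ℝ} (hf : Measurable f)
    (hB : μ.map f = (1 / 2 : ENNReal) • Measure.dirac σ + (1 / 2 : ENNReal) • Measure.dirac (-σ))
    (g : ℝ → ℝ) (hg : Measurable g) : ∫ ω, g (f ω) ∂μ = g σ / 2 + g (-σ) / 2 := by
  have h1 : ∀ a : ℝ, Integrable g (Measure.dirac a) := by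
    intro a
    refine ⟨hg.aestronglyMeasurable, ?_⟩
    rw [HasFiniteIntegral, lintegral_dirac]
    exact enorm_lt_top
  rw [← integral_map hf.aemeasurable hg.aestronglyMeasurable, hB,
    integral_add_measure ((h1 σ).smul_measure (by norm_num)) ((h1 (-σ)).smul_measure (by norm_num)),
    integral_smul_measure, integral_smul_measure, integral_dirac, integral_dirac]
  norm_num
  ring

lemma abs_mul_le' {a b : ℝ} (A B : ℝ) (ha : |a| ≤ A) (hb : |b| ≤ B) : |a * b| ≤ A * B := by
  rw [abs_mul]
  exact mul_le_mul ha hb (abs_nonneg _) ((abs_nonneg a).trans ha)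

/-- Key zero-correlation lemma. -/
lemma zero_corr {d : ℕ} {Ω : Type*} [MeasurableSpace Ω] (μ : Measure Ω) [IsProbabilityMeasure μ]
    (ξ : ℕ → Ω → EuclideanSpace ℝ (Fin (d + 1))) (hmeas : ∀ n, Measurable (ξ n))
    (hindep : iIndepFun
      (fun (p : ℕ × Fin (d + 1)) (ω : Ω) => ξ p.1 ω p.2) μ)
    (S : Finset (ℕ × Fin (d + 1))) (m : ℕ) (j : Fin (d + 1)) (hmj : (m, j) ∉ S)
    (Fc : ((ℕ × Fin (d + 1)) → ℝ) → ℝ) (hFc : Measurable Fc)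
    (hsupp : ∀ x y : (ℕ × Fin (d + 1)) → ℝ, (∀ p ∈ S, x p = y p) → Fc x = Fc y)
    (C : ℝ) (hb : ∀ᵐ ω ∂μ, |Fc (fun p => ξ p.1 ω p.2)| ≤ C)
    (hint : Integrable (fun ω => ξ m ω j) μ) (hmean : ∫ ω, ξ m ω j ∂μ = 0) :
    ∫ ω, Fc (fun p => ξ p.1 ω p.2) * ξ m ω j ∂μ = 0 := by
  classical
  set f := fun (p : ℕ × Fin (d + 1)) (ω : Ω) => ξ p.1 ω p.2 with hf
  have hfm : ∀ p : ℕ × Fin (d + 1), Measurable (f p) :=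
    fun p => (measurable_pi_apply p.2).comp ((WithLp.measurable_ofLp 2 _).comp (hmeas p.1))
  have hdisj : Disjoint S ({(m, j)} : Finset (ℕ × Fin (d + 1))) := by
    simp [Finset.disjoint_singleton_right, hmj]
  have hIF := hindep.indepFun_finset S {(m, j)} hdisj hfm
  set ext : ({x // x ∈ S} → ℝ) → ((ℕ × Fin (d + 1)) → ℝ) :=
    fun g p => if h : p ∈ S then g ⟨p, h⟩ else 0 with hext
  have hextm : Measurable ext := by
    apply measurable_pi_lambda
    intro p
    by_cases h : p ∈ S
    · simpa [ext, h] using measurable_pi_apply (⟨p, h⟩ : {x // x ∈ S})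
    · simpa [ext, h] using (measurable_const : Measurable fun _ : {x // x ∈ S} → ℝ => (0 : ℝ))
  have hIF2 : IndepFun (fun ω => Fc (ext (fun p : {x // x ∈ S} => f p ω)))
      (fun ω => f (m, j) ω) μ := by
    have := hIF.comp (hFc.comp hextm)
      (measurable_pi_apply (⟨(m, j), Finset.mem_singleton_self _⟩ :
        {x // x ∈ ({(m, j)} : Finset (ℕ × Fin (d + 1)))}))
    exact this
  have hkey : ∀ ω, Fc (ext (fun p : {x // x ∈ S} => f p ω)) = Fc (fun p => ξ p.1 ω p.2) := by
    intro ω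
    apply hsupp
    intro p hp
    simp [ext, hp, f]
  have hXm : Measurable (fun ω => Fc (fun p => ξ p.1 ω p.2)) := by
    have htup : Measurable (fun ω => (fun p : {x // x ∈ S} => f p ω)) :=
      measurable_pi_lambda _ fun p => hfm p
    have h1 := (hFc.comp hextm).comp htup
    have h2 : (fun ω => Fc (ext fun p : {x // x ∈ S} => f p ω))
        = fun ω => Fc fun p => ξ p.1 ω p.2 := funext hkey
    rw [← h2]
    exact h1
  have hintF : Integrable (fun ω => Fc (fun p => ξ p.1 ω p.2)) μ :=
    integrable_of_ae_bound' hXm.aestronglyMeasurable hb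
  have hIF3 : IndepFun (fun ω => Fc (fun p => ξ p.1 ω p.2)) (fun ω => ξ m ω j) μ := by
    have h2 : (fun ω => Fc (ext fun p : {x // x ∈ S} => f p ω))
        = fun ω => Fc fun p => ξ p.1 ω p.2 := funext hkey
    rw [h2] at hIF2
    exact hIF2
  have hfin := hIF3.integral_fun_mul_eq_mul_integral hintF.aestronglyMeasurable
    hint.aestronglyMeasurable
  beta_reduce at hfin
  rw [hmean, mul_zero] at hfin
  exact hfin

set_option maxHeartbeats 4000000 in
/-- **Anti-PGD converges to the flat part of the widening valley.**  Consider the widening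
valley loss `L(u,v) = (1/2) v² ‖u‖²` on `ℝ^{d+1}`, initialization `w₀ = (u₀, 0)` with
`‖u₀‖² = D`, step size `η = α/(2D)`, and i.i.d. variables `ξ_n` whose coordinates are
independent `±σ` Bernoulli variables with `0 < σ² ≤ min {α³D/2, D/(8α), αD/(2d)}`.  For
the Anti-PGD iterates `w_{n+1} = w_n - η ∇L(w_n) + (ξ_{n+1} - ξ_n)`, written
componentwise as `u_{n+1} = (1 - η v_n²) u_n + (ξ^u_{n+1} - ξ^u_n)` and
`v_{n+1} = (1 - η ‖u_n‖²) v_n + (ξ^v_{n+1} - ξ^v_n)`: for any `d`, if the iterates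
satisfy `‖u_n‖² ∈ (αD, D/α)` for all `n`, then `lim_{n→∞} E[‖u_n‖²] ≤ αD`. -/
theorem anti_pgd_widening_valley_converges (d : ℕ) (α D σ : ℝ)
    (hα : α ∈ Set.Ioo (0 : ℝ) 1) (hD : 0 < D)
    (hσ : 0 < σ)
    (hσ2 : σ ^ 2 ≤ min (min (α ^ 3 * D / 2) (D / (8 * α))) (α * D / (2 * d)))
    {Ω : Type*} [MeasurableSpace Ω] (μ : Measure Ω) [IsProbabilityMeasure μ]
    (ξ : ℕ → Ω → EuclideanSpace ℝ (Fin (d + 1)))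
    (hmeas : ∀ n, Measurable (ξ n))
    (hindep : iIndepFun
      (fun (p : ℕ × Fin (d + 1)) (ω : Ω) => ξ p.1 ω p.2) μ)
    (hBer : ∀ (n : ℕ) (i : Fin (d + 1)), μ.map (fun ω => ξ n ω i)
      = (1 / 2 : ENNReal) • Measure.dirac σ + (1 / 2 : ENNReal) • Measure.dirac (-σ))
    (η : ℝ) (hη : η = α / (2 * D))
    (u : ℕ → Ω → EuclideanSpace ℝ (Fin d)) (v : ℕ → Ω → ℝ)
    (u0 : EuclideanSpace ℝ (Fin d)) (hu0 : ∀ ω, u 0 ω = u0) (hu0D : ‖u0‖ ^ 2 = D)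
    (hv0 : ∀ ω, v 0 ω = 0)
    (hurec : ∀ (n : ℕ) (ω : Ω) (i : Fin d),
      u (n + 1) ω i = (1 - η * (v n ω) ^ 2) * u n ω i
        + (ξ (n + 1) ω i.castSucc - ξ n ω i.castSucc))
    (hvrec : ∀ (n : ℕ) (ω : Ω),
      v (n + 1) ω = (1 - η * ‖u n ω‖ ^ 2) * v n ω
        + (ξ (n + 1) ω (Fin.last d) - ξ n ω (Fin.last d)))
    (hregion : ∀ (n : ℕ) (ω : Ω), ‖u n ω‖ ^ 2 ∈ Set.Ioo (α * D) (D / α)) :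
    limsup (fun n : ℕ => ∫ ω, ‖u n ω‖ ^ 2 ∂μ) atTop ≤ α * D := by
  obtain ⟨hα0, hα1⟩ := hα
  rcases Nat.eq_zero_or_pos d with hd0 | hd1
  · exfalso
    have h := (le_min_iff.mp hσ2).2
    rw [hd0] at h
    norm_num at h
    nlinarith [pow_pos hσ 2]
  have hη0 : 0 < η := by rw [hη]; positivity
  have hσ3 : σ ^ 2 ≤ α ^ 3 * D / 2 := hσ2.trans ((min_le_left _ _).trans (min_le_left _ _))
  have h2d : 2 * (d : ℝ) * σ ^ 2 ≤ α * D := by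
    have h := hσ2.trans (min_le_right _ _)
    have hd1' : (1 : ℝ) ≤ (d : ℝ) := by exact_mod_cast hd1
    have hdpos : (0 : ℝ) < 2 * (d : ℝ) := by linarith
    rw [le_div_iff₀ hdpos] at h
    linarith
  have hnorm : ∀ (y : EuclideanSpace ℝ (Fin d)), ‖y‖ ^ 2 = ∑ i, (y i) ^ 2 := by
    intro y
    rw [EuclideanSpace.norm_eq, Real.sq_sqrt (by positivity)]
    simp [sq_abs]
  have hmc : ∀ n i, Measurable (fun ω => ξ n ω i) :=
    fun n i => (measurable_pi_apply i).comp ((WithLp.measurable_ofLp 2 _).comp (hmeas n))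
  have hmean : ∀ n i, ∫ ω, ξ n ω i ∂μ = 0 := by
    intro n i
    have h := bern_int (hmc n i) (hBer n i) (fun x => x) measurable_id
    simp only at h
    rw [h]; ring
  have hsqint : ∀ n i, ∫ ω, (ξ n ω i) ^ 2 ∂μ = σ ^ 2 := by
    intro n i
    have h := bern_int (hmc n i) (hBer n i) (fun x => x ^ 2) (measurable_id.pow_const 2)
    simp only at h
    rw [h]; ring
  -- the good event
  have hGae : ∀ᵐ ω ∂μ, ∀ n i, ξ n ω i = σ ∨ ξ n ω i = -σ := by
    rw [ae_all_iff]
    intro n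
    rw [ae_all_iff]
    intro i
    have hs : MeasurableSet ({σ, -σ} : Set ℝ) := (measurableSet_singleton (-σ)).insert σ
    have hmap : μ.map (fun ω => ξ n ω i) ({σ, -σ}ᶜ) = 0 := by
      rw [hBer n i]
      simp [Measure.dirac_apply' _ hs.compl]
    rw [Measure.map_apply (hmc n i) hs.compl] at hmap
    rw [ae_iff]
    have hset : {ω | ¬(ξ n ω i = σ ∨ ξ n ω i = -σ)} = (fun ω => ξ n ω i) ⁻¹' ({σ, -σ}ᶜ) := by
      ext ω
      simp [Set.mem_preimage]
    rw [hset]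
    exact hmap
  -- region facts
  have hq1 : ∀ k ω, α * D < ‖u k ω‖ ^ 2 := fun k ω => (hregion k ω).1
  have hq2 : ∀ k ω, ‖u k ω‖ ^ 2 < D / α := fun k ω => (hregion k ω).2
  have hqpos : ∀ k ω, 0 ≤ ‖u k ω‖ ^ 2 := fun k ω => sq_nonneg _
  have hηq : ∀ k ω, α ^ 2 / 2 ≤ η * ‖u k ω‖ ^ 2 ∧ η * ‖u k ω‖ ^ 2 ≤ 1 / 2 := by
    intro k ω
    have h1 := hq1 k ω
    have h2 := hq2 k ω
    have h2' : α * ‖u k ω‖ ^ 2 < D := by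
      rw [lt_div_iff₀ hα0] at h2
      nlinarith
    constructor
    · rw [hη, div_mul_eq_mul_div, le_div_iff₀ (by positivity : (0 : ℝ) < 2 * D)]
      nlinarith
    · rw [hη, div_mul_eq_mul_div, div_le_iff₀ (by positivity : (0 : ℝ) < 2 * D)]
      nlinarith
  -- measurability of the process
  have hmuv : ∀ k, (∀ i, Measurable fun ω => u k ω i) ∧ Measurable (v k) := by
    intro k
    induction k with
    | zero =>
      constructor
      · intro i
        have : (fun ω => u 0 ω i) = fun _ => u0 i := funext fun ω => by rw [hu0]
        rw [this]; exact measurable_const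
      · have : v 0 = fun _ => (0 : ℝ) := funext fun ω => hv0 ω
        rw [this]; exact measurable_const
    | succ k ih =>
      obtain ⟨ihU, ihV⟩ := ih
      have hq : Measurable fun ω => ‖u k ω‖ ^ 2 := by
        have : (fun ω => ‖u k ω‖ ^ 2) = fun ω => ∑ i, (u k ω i) ^ 2 :=
          funext fun ω => hnorm (u k ω)
        rw [this]
        exact Finset.measurable_sum _ fun i _ => (ihU i).pow_const 2
      constructor
      · intro i
        have : (fun ω => u (k + 1) ω i) = fun ω => (1 - η * (v k ω) ^ 2) * u k ω i
            + (ξ (k + 1) ω i.castSucc - ξ k ω i.castSucc) :=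
          funext fun ω => hurec k ω i
        rw [this]
        exact ((measurable_const.sub (measurable_const.mul (ihV.pow_const 2))).mul (ihU i)).add
          ((hmc (k + 1) i.castSucc).sub (hmc k i.castSucc))
      · have : v (k + 1) = fun ω => (1 - η * ‖u k ω‖ ^ 2) * v k ω
            + (ξ (k + 1) ω (Fin.last d) - ξ k ω (Fin.last d)) :=
          funext fun ω => hvrec k ω
        rw [this]
        exact ((measurable_const.sub (measurable_const.mul hq)).mul ihV).add
          ((hmc (k + 1) (Fin.last d)).sub (hmc k (Fin.last d)))
  have hmu : ∀ k i, Measurable fun ω => u k ω i := fun k => (hmuv k).1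
  have hmv : ∀ k, Measurable (v k) := fun k => (hmuv k).2
  have hmq : ∀ k, Measurable fun ω => ‖u k ω‖ ^ 2 := by
    intro k
    have : (fun ω => ‖u k ω‖ ^ 2) = fun ω => ∑ i, (u k ω i) ^ 2 :=
      funext fun ω => hnorm (u k ω)
    rw [this]
    exact Finset.measurable_sum _ fun i _ => (hmu k i).pow_const 2
  have hmb : ∀ k, Measurable fun ω => 1 - η * (v k ω) ^ 2 :=
    fun k => measurable_const.sub (measurable_const.mul ((hmv k).pow_const 2))
  -- representation on path space
  have hrep : ∀ k ω,
      v k ω = (apgdUV d η (fun i => u0 i) k (fun p => ξ p.1 ω p.2)).2 ∧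
      ∀ i, u k ω i = (apgdUV d η (fun i => u0 i) k (fun p => ξ p.1 ω p.2)).1 i := by
    intro k
    induction k with
    | zero =>
      intro ω
      exact ⟨hv0 ω, fun i => by rw [hu0]; rfl⟩
    | succ k ih =>
      intro ω
      constructor
      · rw [hvrec k ω, hnorm (u k ω)]
        have hs : (∑ i, (u k ω i) ^ 2)
            = ∑ i, ((apgdUV d η (fun i => u0 i) k (fun p => ξ p.1 ω p.2)).1 i) ^ 2 :=
          Finset.sum_congr rfl fun i _ => by rw [(ih ω).2 i]
        rw [hs, (ih ω).1]
        rfl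
      · intro i
        rw [hurec k ω i, (ih ω).1, (ih ω).2 i]
        rfl
  -- quantitative bounds
  obtain ⟨K, hKdef⟩ : ∃ K : ℝ, K = Real.sqrt (D / α) + 2 * σ / α ^ 2 + σ + 1 := ⟨_, rfl⟩
  have hsDα : 0 ≤ Real.sqrt (D / α) := Real.sqrt_nonneg _
  have hK1 : 1 ≤ K := by
    have : 0 ≤ 2 * σ / α ^ 2 := by positivity
    simp only [hKdef]
    linarith
  have hK0 : 0 ≤ K := by linarith
  have hKu : ∀ k ω i, |u k ω i| ≤ K := by
    intro k ω i
    have h1 : (u k ω i) ^ 2 ≤ ‖u k ω‖ ^ 2 := by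
      rw [hnorm]
      exact Finset.single_le_sum (f := fun j => (u k ω j) ^ 2)
        (fun j _ => sq_nonneg _) (Finset.mem_univ i)
    have h2 : (u k ω i) ^ 2 ≤ D / α := h1.trans (hq2 k ω).le
    have h3 : |u k ω i| ≤ Real.sqrt (D / α) := by
      rw [← Real.sqrt_sq_eq_abs]
      exact Real.sqrt_le_sqrt h2
    have : 0 ≤ 2 * σ / α ^ 2 := by positivity
    simp only [hKdef]
    linarith
  have hKq : ∀ k ω, |‖u k ω‖ ^ 2| ≤ K * K := by
    intro k ω
    rw [abs_of_nonneg (hqpos k ω)]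
    have h1 : ‖u k ω‖ ^ 2 ≤ D / α := (hq2 k ω).le
    have h2 : D / α = Real.sqrt (D / α) * Real.sqrt (D / α) :=
      (Real.mul_self_sqrt (by positivity)).symm
    have h3 : Real.sqrt (D / α) ≤ K := by
      have : 0 ≤ 2 * σ / α ^ 2 := by positivity
      simp only [hKdef]; linarith
    nlinarith [mul_le_mul h3 h3 hsDα hK0]
  -- pointwise a.s. bounds on v
  have hvb : ∀ ω, (∀ n i, ξ n ω i = σ ∨ ξ n ω i = -σ) → ∀ k, |v k ω| ≤ 2 * σ / α ^ 2 := by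
    intro ω hG
    have hζ : ∀ k, |ξ k ω (Fin.last d)| = σ := by
      intro k
      rcases hG k (Fin.last d) with h | h <;> rw [h] <;>
        simp [abs_of_nonneg hσ.le, abs_of_nonpos (by linarith : -σ ≤ 0)]
    have hσα : σ ≤ σ / α ^ 2 := by
      rw [le_div_iff₀ (by positivity : (0:ℝ) < α ^ 2)]
      nlinarith [mul_nonneg hσ.le (mul_nonneg (sub_nonneg.mpr hα1.le)
        (by linarith : (0:ℝ) ≤ 1 + α))]
    have hsb : ∀ k, |v k ω - ξ k ω (Fin.last d)| ≤ σ / α ^ 2 := by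
      intro k
      induction k with
      | zero =>
        rw [hv0, zero_sub, abs_neg, hζ 0]
        exact hσα
      | succ k ih =>
        have hA := hηq k ω
        set A := η * ‖u k ω‖ ^ 2 with hAdef
        have hE : v (k + 1) ω - ξ (k + 1) ω (Fin.last d)
            = (1 - A) * (v k ω - ξ k ω (Fin.last d)) + (-A) * (ξ k ω (Fin.last d)) := by
          rw [hvrec k ω]
          ring
        rw [hE]
        have h1 : |(1 - A) * (v k ω - ξ k ω (Fin.last d))| ≤ (1 - α ^ 2 / 2) * (σ / α ^ 2) := by
          apply abs_mul_le'
          · rw [abs_of_nonneg (by linarith [hA.2] : (0:ℝ) ≤ 1 - A)]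
            linarith [hA.1]
          · exact ih
        have h2 : |(-A) * (ξ k ω (Fin.last d))| ≤ (1 / 2) * σ := by
          apply abs_mul_le'
          · rw [abs_neg, abs_of_nonneg (by nlinarith [hA.1] : (0:ℝ) ≤ A)]
            exact hA.2
          · rw [hζ k]
        have h3 : (1 - α ^ 2 / 2) * (σ / α ^ 2) + (1 / 2) * σ = σ / α ^ 2 := by
          field_simp
          ring
        calc |(1 - A) * (v k ω - ξ k ω (Fin.last d)) + (-A) * (ξ k ω (Fin.last d))|
            ≤ |(1 - A) * (v k ω - ξ k ω (Fin.last d))| + |(-A) * (ξ k ω (Fin.last d))| :=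
              abs_add_le _ _
          _ ≤ (1 - α ^ 2 / 2) * (σ / α ^ 2) + (1 / 2) * σ := add_le_add h1 h2
          _ = σ / α ^ 2 := h3
    intro k
    calc |v k ω| ≤ |v k ω - ξ k ω (Fin.last d)| + |ξ k ω (Fin.last d)| := by
          have := abs_add_le (v k ω - ξ k ω (Fin.last d)) (ξ k ω (Fin.last d))
          simpa using this
      _ ≤ σ / α ^ 2 + σ := add_le_add (hsb k) (hζ k).le
      _ ≤ 2 * σ / α ^ 2 := by
          have : σ + σ ≤ 2 * σ := by linarith
          have h4 : σ / α ^ 2 + σ / α ^ 2 = 2 * σ / α ^ 2 := by ring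
          linarith [hσα]
  have hKv : ∀ ω, (∀ n i, ξ n ω i = σ ∨ ξ n ω i = -σ) → ∀ k, |v k ω| ≤ K := by
    intro ω hG k
    have := hvb ω hG k
    simp only [hKdef]
    linarith [hsDα, hσ.le]
  have hb01 : ∀ ω, (∀ n i, ξ n ω i = σ ∨ ξ n ω i = -σ) → ∀ k,
      0 ≤ 1 - η * (v k ω) ^ 2 ∧ 1 - η * (v k ω) ^ 2 ≤ 1 := by
    intro ω hG k
    have hv := hvb ω hG k
    have hv2 : (v k ω) ^ 2 ≤ (2 * σ / α ^ 2) ^ 2 := by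
      rw [← sq_abs]
      exact pow_le_pow_left₀ (abs_nonneg _) hv 2
    have hBval : η * (2 * σ / α ^ 2) ^ 2 = 2 * σ ^ 2 / (D * α ^ 3) := by
      rw [hη]
      field_simp
    have hB1 : η * (2 * σ / α ^ 2) ^ 2 ≤ 1 := by
      rw [hBval, div_le_one (by positivity)]
      nlinarith
    constructor
    · have := mul_le_mul_of_nonneg_left hv2 hη0.le
      linarith
    · nlinarith [sq_nonneg (v k ω), hη0.le]
  have hKξ : ∀ ω, (∀ n i, ξ n ω i = σ ∨ ξ n ω i = -σ) → ∀ k i, |ξ k ω i| ≤ K := by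
    intro ω hG k i
    have hσK : σ ≤ K := by
      have : 0 ≤ 2 * σ / α ^ 2 := by positivity
      simp only [hKdef]
      linarith [hsDα]
    rcases hG k i with h | h <;> rw [h]
    · rw [abs_of_nonneg hσ.le]; exact hσK
    · rw [abs_neg, abs_of_nonneg hσ.le]; exact hσK
  have hKb : ∀ ω, (∀ n i, ξ n ω i = σ ∨ ξ n ω i = -σ) → ∀ k,
      |1 - η * (v k ω) ^ 2| ≤ 1 := by
    intro ω hG k
    have h := hb01 ω hG k
    rw [abs_of_nonneg h.1]
    exact h.2
  -- integrability helpers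
  have hIB : ∀ (f : Ω → ℝ), Measurable f → ∀ (C : ℝ), (∀ᵐ ω ∂μ, |f ω| ≤ C) →
      Integrable f μ :=
    fun f hm C h => integrable_of_ae_bound' hm.aestronglyMeasurable h
  have hintq : ∀ k, Integrable (fun ω => ‖u k ω‖ ^ 2) μ :=
    fun k => hIB _ (hmq k) (K * K) (Filter.Eventually.of_forall fun ω => hKq k ω)
  have hintv2 : ∀ k, Integrable (fun ω => (v k ω) ^ 2) μ := by
    intro k
    refine hIB _ ((hmv k).pow_const 2) (K * K) ?_
    filter_upwards [hGae] with ω hG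
    have h := hKv ω hG k
    have h2 : |(v k ω) ^ 2| = |v k ω| * |v k ω| := by
      rw [← abs_mul]
      congr 1
      ring
    rw [h2]
    exact mul_le_mul h h (abs_nonneg _) hK0
  have hintξ : ∀ k i, Integrable (fun ω => ξ k ω i) μ := by
    intro k i
    refine hIB _ (hmc k i) K ?_
    filter_upwards [hGae] with ω hG
    exact hKξ ω hG k i
  have hintb : ∀ k, Integrable (fun ω => 1 - η * (v k ω) ^ 2) μ := by
    intro k
    refine hIB _ (hmb k) 1 ?_
    filter_upwards [hGae] with ω hG
    exact hKb ω hG k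
  have hintξ2 : ∀ k i, Integrable (fun ω => (ξ k ω i) ^ 2) μ := by
    intro k i
    refine hIB _ ((hmc k i).pow_const 2) (K * K) ?_
    filter_upwards [hGae] with ω hG
    have h := hKξ ω hG k i
    have h2 : |(ξ k ω i) ^ 2| = |ξ k ω i| * |ξ k ω i| := by
      rw [← abs_mul]; congr 1; ring
    rw [h2]
    exact mul_le_mul h h (abs_nonneg _) hK0
  have hIbval : ∀ k, ∫ ω, (1 - η * (v k ω) ^ 2) ∂μ
      = 1 - η * ∫ ω, (v k ω) ^ 2 ∂μ := by
    intro k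
    rw [integral_sub (integrable_const 1) ((hintv2 k).const_mul η), integral_const_mul]
    simp [measure_univ]
  -- the main one-step inequality
  have hstep : ∀ m : ℕ, ∫ ω, ‖u (m + 2) ω‖ ^ 2 ∂μ - α * D
      ≤ (1 - η * σ ^ 2) * (∫ ω, ‖u (m + 1) ω‖ ^ 2 ∂μ - α * D) := by
    intro m
    -- zero-correlation fact Z1
    have hZ1 : ∀ i : Fin d, ∫ ω, ((1 - η * (v (m + 1) ω) ^ 2) * u (m + 1) ω i)
        * ξ (m + 2) ω i.castSucc ∂μ = 0 := by
      intro i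
      set Fc : ((ℕ × Fin (d + 1)) → ℝ) → ℝ := fun x =>
        (1 - η * ((apgdUV d η (fun j => u0 j) (m + 1) x).2) ^ 2)
          * ((apgdUV d η (fun j => u0 j) (m + 1) x).1 i) with hFcdef
      have hFeq : ∀ ω : Ω, Fc (fun p => ξ p.1 ω p.2)
          = (1 - η * (v (m + 1) ω) ^ 2) * u (m + 1) ω i := by
        intro ω
        rw [hFcdef]
        simp only
        rw [(hrep (m + 1) ω).1, (hrep (m + 1) ω).2 i]
      have hnm : (m + 2, i.castSucc) ∉ Finset.range (m + 2) ×ˢ (Finset.univ : Finset (Fin (d + 1))) := by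
        intro h
        have := (Finset.mem_product.mp h).1
        rw [Finset.mem_range] at this
        omega
      have hFm : Measurable Fc := by
        rw [hFcdef]
        exact (measurable_const.sub (measurable_const.mul
            (((apgdUV_measurable d η (fun j => u0 j) (m + 1)).2).pow_const 2))).mul
          ((apgdUV_measurable d η (fun j => u0 j) (m + 1)).1 i)
      have hsupp : ∀ x y : (ℕ × Fin (d + 1)) → ℝ,
          (∀ p ∈ Finset.range (m + 2) ×ˢ (Finset.univ : Finset (Fin (d + 1))), x p = y p) →
          Fc x = Fc y := by
        intro x y hxy
        have hmem : ∀ p : ℕ × Fin (d + 1), p.1 < m + 2 →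
            p ∈ Finset.range (m + 2) ×ˢ (Finset.univ : Finset (Fin (d + 1))) :=
          fun p hp => Finset.mem_product.mpr ⟨Finset.mem_range.mpr hp, Finset.mem_univ _⟩
        have h1 : ∀ p : ℕ × Fin (d + 1), p.1 < m + 1 → x p = y p :=
          fun p hp => hxy p (hmem p (by omega))
        have hc := apgdUV_congr d η (fun j => u0 j) (m + 1) x y h1
        have hV := hc.1 (hxy (m + 1, Fin.last d) (hmem _ (by omega)))
        have hU := hc.2 (fun j => hxy (m + 1, j.castSucc) (hmem _ (by omega)))
        rw [hFcdef]
        simp only [hV, hU]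
      have hbd : ∀ᵐ ω ∂μ, |Fc (fun p => ξ p.1 ω p.2)| ≤ 1 * K := by
        filter_upwards [hGae] with ω hG
        rw [hFeq ω]
        exact abs_mul_le' 1 K (hKb ω hG (m + 1)) (hKu (m + 1) ω i)
      have h0 := zero_corr μ ξ hmeas hindep _ (m + 2) i.castSucc hnm Fc hFm hsupp
        (1 * K) hbd (hintξ (m + 2) i.castSucc) (hmean (m + 2) i.castSucc)
      have hfe : (fun ω => ((1 - η * (v (m + 1) ω) ^ 2) * u (m + 1) ω i)
          * ξ (m + 2) ω i.castSucc)
          = fun ω => Fc (fun p => ξ p.1 ω p.2) * ξ (m + 2) ω i.castSucc :=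
        funext fun ω => by rw [hFeq ω]
      rw [hfe]
      exact h0
    -- zero-correlation fact Z3
    have hZ3 : ∀ i : Fin d, ∫ ω, (ξ (m + 1) ω i.castSucc) * ξ (m + 2) ω i.castSucc ∂μ = 0 := by
      intro i
      have hnm : (m + 2, i.castSucc) ∉ ({(m + 1, i.castSucc)} : Finset (ℕ × Fin (d + 1))) := by
        intro h
        rw [Finset.mem_singleton, Prod.ext_iff] at h
        omega
      have h0 := zero_corr μ ξ hmeas hindep {(m + 1, i.castSucc)} (m + 2) i.castSucc hnm
        (fun x => x (m + 1, i.castSucc)) (measurable_pi_apply _)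
        (fun x y hxy => hxy _ (Finset.mem_singleton_self _)) K
        (by filter_upwards [hGae] with ω hG; exact hKξ ω hG (m + 1) i.castSucc)
        (hintξ (m + 2) i.castSucc) (hmean (m + 2) i.castSucc)
      exact h0
    -- zero-correlation fact Z2
    have hZ2 : ∀ i : Fin d, ∫ ω, ((1 - η * (v (m + 1) ω) ^ 2)
        * ((1 - η * (v m ω) ^ 2) * u m ω i - ξ m ω i.castSucc)) * ξ (m + 1) ω i.castSucc ∂μ
        = 0 := by
      intro i
      set S2 : Finset (ℕ × Fin (d + 1)) :=
        (Finset.range (m + 1) ×ˢ (Finset.univ : Finset (Fin (d + 1))))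
          ∪ {(m + 1, Fin.last d)} with hS2def
      set Fc : ((ℕ × Fin (d + 1)) → ℝ) → ℝ := fun x =>
        (1 - η * ((apgdUV d η (fun j => u0 j) (m + 1) x).2) ^ 2)
          * ((1 - η * ((apgdUV d η (fun j => u0 j) m x).2) ^ 2)
              * ((apgdUV d η (fun j => u0 j) m x).1 i) - x (m, i.castSucc)) with hFcdef
      have hFeq : ∀ ω : Ω, Fc (fun p => ξ p.1 ω p.2)
          = (1 - η * (v (m + 1) ω) ^ 2)
              * ((1 - η * (v m ω) ^ 2) * u m ω i - ξ m ω i.castSucc) := by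
        intro ω
        rw [hFcdef]
        simp only
        rw [(hrep (m + 1) ω).1, (hrep m ω).1, (hrep m ω).2 i]
      have hnm : (m + 1, i.castSucc) ∉ S2 := by
        intro h
        rw [hS2def, Finset.mem_union] at h
        rcases h with h | h
        · have := (Finset.mem_product.mp h).1
          rw [Finset.mem_range] at this
          omega
        · rw [Finset.mem_singleton, Prod.ext_iff] at h
          exact absurd h.2 (Fin.castSucc_lt_last i).ne
      have hFm : Measurable Fc := by
        rw [hFcdef]
        exact (measurable_const.sub (measurable_const.mul
            (((apgdUV_measurable d η (fun j => u0 j) (m + 1)).2).pow_const 2))).mul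
          (((measurable_const.sub (measurable_const.mul
            (((apgdUV_measurable d η (fun j => u0 j) m).2).pow_const 2))).mul
            ((apgdUV_measurable d η (fun j => u0 j) m).1 i)).sub (measurable_pi_apply _))
      have hsupp : ∀ x y : (ℕ × Fin (d + 1)) → ℝ, (∀ p ∈ S2, x p = y p) → Fc x = Fc y := by
        intro x y hxy
        have h1 : ∀ p : ℕ × Fin (d + 1), p.1 < m + 1 → x p = y p :=
          fun p hp => hxy p (by
            rw [hS2def, Finset.mem_union]
            exact Or.inl (Finset.mem_product.mpr ⟨Finset.mem_range.mpr hp, Finset.mem_univ _⟩))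
        have h0 : ∀ p : ℕ × Fin (d + 1), p.1 < m → x p = y p :=
          fun p hp => h1 p (by omega)
        have hmemlast : (m + 1, Fin.last d) ∈ S2 := by
          rw [hS2def, Finset.mem_union]
          exact Or.inr (Finset.mem_singleton_self _)
        have hV1 := (apgdUV_congr d η (fun j => u0 j) (m + 1) x y h1).1 (hxy _ hmemlast)
        have hVm := (apgdUV_congr d η (fun j => u0 j) m x y h0).1 (h1 (m, Fin.last d) (by omega))
        have hUm := (apgdUV_congr d η (fun j => u0 j) m x y h0).2
          (fun j => h1 (m, j.castSucc) (by omega))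
        have hx : x (m, i.castSucc) = y (m, i.castSucc) := h1 _ (by omega)
        rw [hFcdef]
        simp only [hV1, hVm, hUm, hx]
      have hbd : ∀ᵐ ω ∂μ, |Fc (fun p => ξ p.1 ω p.2)| ≤ 1 * (1 * K + K) := by
        filter_upwards [hGae] with ω hG
        rw [hFeq ω]
        refine abs_mul_le' 1 (1 * K + K) (hKb ω hG (m + 1)) ?_
        have h1 : |(1 - η * (v m ω) ^ 2) * u m ω i| ≤ 1 * K :=
          abs_mul_le' 1 K (hKb ω hG m) (hKu m ω i)
        have h2 : |ξ m ω i.castSucc| ≤ K := hKξ ω hG m i.castSucc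
        calc |(1 - η * (v m ω) ^ 2) * u m ω i - ξ m ω i.castSucc|
            ≤ |(1 - η * (v m ω) ^ 2) * u m ω i| + |ξ m ω i.castSucc| := abs_sub _ _
          _ ≤ 1 * K + K := add_le_add h1 h2
      have h0 := zero_corr μ ξ hmeas hindep S2 (m + 1) i.castSucc hnm Fc hFm hsupp
        (1 * (1 * K + K)) hbd (hintξ (m + 1) i.castSucc) (hmean (m + 1) i.castSucc)
      have hfe : (fun ω => ((1 - η * (v (m + 1) ω) ^ 2)
          * ((1 - η * (v m ω) ^ 2) * u m ω i - ξ m ω i.castSucc)) * ξ (m + 1) ω i.castSucc)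
          = fun ω => Fc (fun p => ξ p.1 ω p.2) * ξ (m + 1) ω i.castSucc :=
        funext fun ω => by rw [hFeq ω]
      rw [hfe]
      exact h0
    -- zero-correlation fact Z4
    have hZ4 : ∫ ω, (((1 - η * ‖u m ω‖ ^ 2) * v m ω - ξ m ω (Fin.last d))
        * (‖u (m + 1) ω‖ ^ 2 - α * D)) * ξ (m + 1) ω (Fin.last d) ∂μ = 0 := by
      set S4 : Finset (ℕ × Fin (d + 1)) :=
        (Finset.range (m + 2) ×ˢ (Finset.univ : Finset (Fin (d + 1)))).erase (m + 1, Fin.last d)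
        with hS4def
      set Fc : ((ℕ × Fin (d + 1)) → ℝ) → ℝ := fun x =>
        ((1 - η * (∑ j, ((apgdUV d η (fun j => u0 j) m x).1 j) ^ 2))
            * ((apgdUV d η (fun j => u0 j) m x).2) - x (m, Fin.last d))
          * ((∑ j, ((apgdUV d η (fun j => u0 j) (m + 1) x).1 j) ^ 2) - α * D) with hFcdef
      have hFeq : ∀ ω : Ω, Fc (fun p => ξ p.1 ω p.2)
          = ((1 - η * ‖u m ω‖ ^ 2) * v m ω - ξ m ω (Fin.last d))
              * (‖u (m + 1) ω‖ ^ 2 - α * D) := by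
        intro ω
        rw [hFcdef]
        simp only
        rw [hnorm (u m ω), hnorm (u (m + 1) ω)]
        have hs1 : (∑ j, (u m ω j) ^ 2)
            = ∑ j, ((apgdUV d η (fun j => u0 j) m (fun p => ξ p.1 ω p.2)).1 j) ^ 2 :=
          Finset.sum_congr rfl fun j _ => by rw [(hrep m ω).2 j]
        have hs2 : (∑ j, (u (m + 1) ω j) ^ 2)
            = ∑ j, ((apgdUV d η (fun j => u0 j) (m + 1) (fun p => ξ p.1 ω p.2)).1 j) ^ 2 :=
          Finset.sum_congr rfl fun j _ => by rw [(hrep (m + 1) ω).2 j]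
        rw [hs1, hs2, (hrep m ω).1]
      have hnm : (m + 1, Fin.last d) ∉ S4 := by
        rw [hS4def]
        exact Finset.notMem_erase _ _
      have hFm : Measurable Fc := by
        rw [hFcdef]
        have hsm : Measurable fun x => ∑ j, ((apgdUV d η (fun j => u0 j) m x).1 j) ^ 2 :=
          Finset.measurable_sum _ fun j _ =>
            ((apgdUV_measurable d η (fun j => u0 j) m).1 j).pow_const 2
        have hsm1 : Measurable fun x => ∑ j, ((apgdUV d η (fun j => u0 j) (m + 1) x).1 j) ^ 2 :=
          Finset.measurable_sum _ fun j _ =>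
            ((apgdUV_measurable d η (fun j => u0 j) (m + 1)).1 j).pow_const 2
        exact (((measurable_const.sub (measurable_const.mul hsm)).mul
          ((apgdUV_measurable d η (fun j => u0 j) m).2)).sub (measurable_pi_apply _)).mul
          (hsm1.sub measurable_const)
      have hsupp : ∀ x y : (ℕ × Fin (d + 1)) → ℝ, (∀ p ∈ S4, x p = y p) → Fc x = Fc y := by
        intro x y hxy
        have h1 : ∀ p : ℕ × Fin (d + 1), p.1 < m + 1 → x p = y p := by
          intro p hp
          refine hxy p ?_
          rw [hS4def, Finset.mem_erase]
          refine ⟨?_, Finset.mem_product.mpr ⟨Finset.mem_range.mpr (by omega), Finset.mem_univ _⟩⟩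
          intro hcontr
          rw [hcontr] at hp
          exact Nat.lt_irrefl _ hp
        have h0 : ∀ p : ℕ × Fin (d + 1), p.1 < m → x p = y p :=
          fun p hp => h1 p (by omega)
        have hVm := (apgdUV_congr d η (fun j => u0 j) m x y h0).1 (h1 (m, Fin.last d) (by omega))
        have hUm := (apgdUV_congr d η (fun j => u0 j) m x y h0).2
          (fun j => h1 (m, j.castSucc) (by omega))
        have hU1 := (apgdUV_congr d η (fun j => u0 j) (m + 1) x y h1).2
          (fun j => hxy (m + 1, j.castSucc) (by
            rw [hS4def, Finset.mem_erase]
            refine ⟨?_, Finset.mem_product.mpr ⟨Finset.mem_range.mpr (by omega),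
              Finset.mem_univ _⟩⟩
            intro hcontr
            have := congrArg Prod.snd hcontr
            exact absurd this (Fin.castSucc_lt_last j).ne))
        have hx : x (m, Fin.last d) = y (m, Fin.last d) := h1 _ (by omega)
        rw [hFcdef]
        simp only [hVm, hUm, hU1, hx]
      have hbd : ∀ᵐ ω ∂μ, |Fc (fun p => ξ p.1 ω p.2)| ≤ (1 * K + K) * (K * K + α * D) := by
        filter_upwards [hGae] with ω hG
        rw [hFeq ω]
        refine abs_mul_le' (1 * K + K) (K * K + α * D) ?_ ?_
        · have h1 : |(1 - η * ‖u m ω‖ ^ 2) * v m ω| ≤ 1 * K := by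
            refine abs_mul_le' 1 K ?_ (hKv ω hG m)
            have h := hηq m ω
            rw [abs_of_nonneg (by linarith [h.2] : (0:ℝ) ≤ 1 - η * ‖u m ω‖ ^ 2)]
            linarith [h.1, sq_nonneg α]
          have h2 : |ξ m ω (Fin.last d)| ≤ K := hKξ ω hG m (Fin.last d)
          calc |(1 - η * ‖u m ω‖ ^ 2) * v m ω - ξ m ω (Fin.last d)|
              ≤ |(1 - η * ‖u m ω‖ ^ 2) * v m ω| + |ξ m ω (Fin.last d)| := abs_sub _ _
            _ ≤ 1 * K + K := add_le_add h1 h2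
        · have h1 : |‖u (m + 1) ω‖ ^ 2| ≤ K * K := hKq (m + 1) ω
          have h2 : |α * D| = α * D := abs_of_nonneg (by positivity)
          calc |‖u (m + 1) ω‖ ^ 2 - α * D|
              ≤ |‖u (m + 1) ω‖ ^ 2| + |α * D| := abs_sub _ _
            _ ≤ K * K + α * D := by rw [h2]; exact add_le_add h1 le_rfl
      have h0 := zero_corr μ ξ hmeas hindep S4 (m + 1) (Fin.last d) hnm Fc hFm hsupp
        ((1 * K + K) * (K * K + α * D)) hbd (hintξ (m + 1) (Fin.last d))
        (hmean (m + 1) (Fin.last d))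
      have hfe : (fun ω => (((1 - η * ‖u m ω‖ ^ 2) * v m ω - ξ m ω (Fin.last d))
          * (‖u (m + 1) ω‖ ^ 2 - α * D)) * ξ (m + 1) ω (Fin.last d))
          = fun ω => Fc (fun p => ξ p.1 ω p.2) * ξ (m + 1) ω (Fin.last d) :=
        funext fun ω => by rw [hFeq ω]
      rw [hfe]
      exact h0
    -- cross term value: anticorrelation
    have hC : ∀ i : Fin d, ∫ ω, ((1 - η * (v (m + 1) ω) ^ 2) * u (m + 1) ω i)
        * ξ (m + 1) ω i.castSucc ∂μ
        = σ ^ 2 * ∫ ω, (1 - η * (v (m + 1) ω) ^ 2) ∂μ := by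
      intro i
      have hIZ2 : Integrable (fun ω => ((1 - η * (v (m + 1) ω) ^ 2)
          * ((1 - η * (v m ω) ^ 2) * u m ω i - ξ m ω i.castSucc))
          * ξ (m + 1) ω i.castSucc) μ := by
        refine hIB _ (((hmb (m + 1)).mul (((hmb m).mul (hmu m i)).sub
          (hmc m i.castSucc))).mul (hmc (m + 1) i.castSucc)) ((1 * (1 * K + K)) * K) ?_
        filter_upwards [hGae] with ω hG
        refine abs_mul_le' _ K ?_ (hKξ ω hG (m + 1) i.castSucc)
        refine abs_mul_le' 1 (1 * K + K) (hKb ω hG (m + 1)) ?_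
        calc |(1 - η * (v m ω) ^ 2) * u m ω i - ξ m ω i.castSucc|
            ≤ |(1 - η * (v m ω) ^ 2) * u m ω i| + |ξ m ω i.castSucc| := abs_sub _ _
          _ ≤ 1 * K + K := add_le_add (abs_mul_le' 1 K (hKb ω hG m) (hKu m ω i))
              (hKξ ω hG m i.castSucc)
      have hIσb : Integrable (fun ω => σ ^ 2 * (1 - η * (v (m + 1) ω) ^ 2)) μ :=
        (hintb (m + 1)).const_mul _
      have hpt : ∀ᵐ ω ∂μ, ((1 - η * (v (m + 1) ω) ^ 2) * u (m + 1) ω i)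
          * ξ (m + 1) ω i.castSucc
          = ((1 - η * (v (m + 1) ω) ^ 2)
              * ((1 - η * (v m ω) ^ 2) * u m ω i - ξ m ω i.castSucc))
              * ξ (m + 1) ω i.castSucc
            + σ ^ 2 * (1 - η * (v (m + 1) ω) ^ 2) := by
        filter_upwards [hGae] with ω hG
        have hξ2 : (ξ (m + 1) ω i.castSucc) ^ 2 = σ ^ 2 := by
          rcases hG (m + 1) i.castSucc with h | h <;> rw [h] <;> ring
        rw [hurec m ω i]
        linear_combination (1 - η * (v (m + 1) ω) ^ 2) * hξ2
      rw [integral_congr_ae hpt, integral_add hIZ2 hIσb, hZ2 i, integral_const_mul, zero_add]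
    -- integrability of the pieces of the expansion
    have hIb2q : Integrable (fun ω => (1 - η * (v (m + 1) ω) ^ 2) ^ 2 * ‖u (m + 1) ω‖ ^ 2) μ := by
      refine hIB _ (((hmb (m + 1)).pow_const 2).mul (hmq (m + 1))) (1 * (K * K)) ?_
      filter_upwards [hGae] with ω hG
      refine abs_mul_le' 1 (K * K) ?_ (hKq (m + 1) ω)
      have h := hKb ω hG (m + 1)
      have h2 : |(1 - η * (v (m + 1) ω) ^ 2) ^ 2|
          = |1 - η * (v (m + 1) ω) ^ 2| * |1 - η * (v (m + 1) ω) ^ 2| := by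
        rw [← abs_mul]; congr 1; ring
      rw [h2]
      calc |1 - η * (v (m + 1) ω) ^ 2| * |1 - η * (v (m + 1) ω) ^ 2|
          ≤ 1 * 1 := mul_le_mul h h (abs_nonneg _) zero_le_one
        _ = 1 := one_mul 1
    have hIS1 : ∀ i : Fin d, Integrable (fun ω =>
        2 * (((1 - η * (v (m + 1) ω) ^ 2) * u (m + 1) ω i) * ξ (m + 2) ω i.castSucc)) μ := by
      intro i
      refine hIB _ (measurable_const.mul (((hmb (m + 1)).mul (hmu (m + 1) i)).mul
        (hmc (m + 2) i.castSucc))) (2 * ((1 * K) * K)) ?_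
      filter_upwards [hGae] with ω hG
      refine abs_mul_le' 2 ((1 * K) * K) (by norm_num) ?_
      exact abs_mul_le' (1 * K) K (abs_mul_le' 1 K (hKb ω hG (m + 1)) (hKu (m + 1) ω i))
        (hKξ ω hG (m + 2) i.castSucc)
    have hIS2 : ∀ i : Fin d, Integrable (fun ω =>
        2 * (((1 - η * (v (m + 1) ω) ^ 2) * u (m + 1) ω i) * ξ (m + 1) ω i.castSucc)) μ := by
      intro i
      refine hIB _ (measurable_const.mul (((hmb (m + 1)).mul (hmu (m + 1) i)).mul
        (hmc (m + 1) i.castSucc))) (2 * ((1 * K) * K)) ?_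
      filter_upwards [hGae] with ω hG
      refine abs_mul_le' 2 ((1 * K) * K) (by norm_num) ?_
      exact abs_mul_le' (1 * K) K (abs_mul_le' 1 K (hKb ω hG (m + 1)) (hKu (m + 1) ω i))
        (hKξ ω hG (m + 1) i.castSucc)
    have hIS3 : ∀ i : Fin d, Integrable (fun ω =>
        (ξ (m + 2) ω i.castSucc - ξ (m + 1) ω i.castSucc) ^ 2) μ := by
      intro i
      refine hIB _ (((hmc (m + 2) i.castSucc).sub (hmc (m + 1) i.castSucc)).pow_const 2)
        ((K + K) * (K + K)) ?_
      filter_upwards [hGae] with ω hG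
      have h : |ξ (m + 2) ω i.castSucc - ξ (m + 1) ω i.castSucc| ≤ K + K :=
        (abs_sub _ _).trans (add_le_add (hKξ ω hG (m + 2) _) (hKξ ω hG (m + 1) _))
      have h2 : |(ξ (m + 2) ω i.castSucc - ξ (m + 1) ω i.castSucc) ^ 2|
          = |ξ (m + 2) ω i.castSucc - ξ (m + 1) ω i.castSucc|
            * |ξ (m + 2) ω i.castSucc - ξ (m + 1) ω i.castSucc| := by
        rw [← abs_mul]; congr 1; ring
      rw [h2]
      exact mul_le_mul h h (abs_nonneg _) (by linarith)
    -- pointwise expansion of the squared norm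
    have hptQ : (fun ω => ‖u (m + 2) ω‖ ^ 2) = fun ω =>
        (1 - η * (v (m + 1) ω) ^ 2) ^ 2 * ‖u (m + 1) ω‖ ^ 2
        + (∑ i : Fin d, 2 * (((1 - η * (v (m + 1) ω) ^ 2) * u (m + 1) ω i) * ξ (m + 2) ω i.castSucc))
        - (∑ i : Fin d, 2 * (((1 - η * (v (m + 1) ω) ^ 2) * u (m + 1) ω i) * ξ (m + 1) ω i.castSucc))
        + (∑ i : Fin d, (ξ (m + 2) ω i.castSucc - ξ (m + 1) ω i.castSucc) ^ 2) := by
      funext ω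
      rw [hnorm (u (m + 2) ω), hnorm (u (m + 1) ω), Finset.mul_sum,
        ← Finset.sum_add_distrib, ← Finset.sum_sub_distrib, ← Finset.sum_add_distrib]
      refine Finset.sum_congr rfl fun i _ => ?_
      rw [hurec (m + 1) ω i]
      ring
    -- values of the three sums
    have hS1val : (∑ i : Fin d, ∫ ω, 2 * (((1 - η * (v (m + 1) ω) ^ 2) * u (m + 1) ω i)
        * ξ (m + 2) ω i.castSucc) ∂μ) = 0 :=
      Finset.sum_eq_zero fun i _ => by rw [integral_const_mul, hZ1 i, mul_zero]
    have hS2val : (∑ i : Fin d, ∫ ω, 2 * (((1 - η * (v (m + 1) ω) ^ 2) * u (m + 1) ω i)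
        * ξ (m + 1) ω i.castSucc) ∂μ)
        = (d : ℝ) * (2 * (σ ^ 2 * ∫ ω, (1 - η * (v (m + 1) ω) ^ 2) ∂μ)) := by
      rw [Finset.sum_congr rfl (fun i _ => by rw [integral_const_mul, hC i])]
      rw [Finset.sum_const, Finset.card_univ, Fintype.card_fin, nsmul_eq_mul]
    have hS3val : (∑ i : Fin d, ∫ ω, (ξ (m + 2) ω i.castSucc - ξ (m + 1) ω i.castSucc) ^ 2 ∂μ)
        = (d : ℝ) * (2 * σ ^ 2) := by
      have hone : ∀ i : Fin d, ∫ ω, (ξ (m + 2) ω i.castSucc - ξ (m + 1) ω i.castSucc) ^ 2 ∂μ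
          = 2 * σ ^ 2 := by
        intro i
        have hIξξ : Integrable (fun ω => ξ (m + 1) ω i.castSucc * ξ (m + 2) ω i.castSucc) μ := by
          refine hIB _ ((hmc (m + 1) i.castSucc).mul (hmc (m + 2) i.castSucc)) (K * K) ?_
          filter_upwards [hGae] with ω hG
          exact abs_mul_le' K K (hKξ ω hG (m + 1) _) (hKξ ω hG (m + 2) _)
        have hpt : (fun ω => (ξ (m + 2) ω i.castSucc - ξ (m + 1) ω i.castSucc) ^ 2)
            = fun ω => ((ξ (m + 2) ω i.castSucc) ^ 2 + (ξ (m + 1) ω i.castSucc) ^ 2)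
              - 2 * (ξ (m + 1) ω i.castSucc * ξ (m + 2) ω i.castSucc) :=
          funext fun ω => by ring
        have hIsum : Integrable (fun ω => (ξ (m + 2) ω i.castSucc) ^ 2
            + (ξ (m + 1) ω i.castSucc) ^ 2) μ := (hintξ2 (m + 2) _).add (hintξ2 (m + 1) _)
        have hI2ξξ : Integrable (fun ω =>
            2 * (ξ (m + 1) ω i.castSucc * ξ (m + 2) ω i.castSucc)) μ := hIξξ.const_mul 2
        rw [hpt, integral_sub hIsum hI2ξξ,
          integral_add (hintξ2 (m + 2) _) (hintξ2 (m + 1) _), integral_const_mul,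
          hsqint, hsqint, hZ3 i]
        ring
      rw [Finset.sum_congr rfl (fun i _ => hone i), Finset.sum_const, Finset.card_univ,
        Fintype.card_fin, nsmul_eq_mul]
    -- the exact integral identity
    have hXval : ∫ ω, ‖u (m + 2) ω‖ ^ 2 ∂μ
        = ∫ ω, (1 - η * (v (m + 1) ω) ^ 2) ^ 2 * ‖u (m + 1) ω‖ ^ 2 ∂μ
          - (d : ℝ) * (2 * (σ ^ 2 * ∫ ω, (1 - η * (v (m + 1) ω) ^ 2) ∂μ))
          + (d : ℝ) * (2 * σ ^ 2) := by
      have hA1 : Integrable (fun ω => (1 - η * (v (m + 1) ω) ^ 2) ^ 2 * ‖u (m + 1) ω‖ ^ 2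
          + ∑ i : Fin d, 2 * (((1 - η * (v (m + 1) ω) ^ 2) * u (m + 1) ω i)
              * ξ (m + 2) ω i.castSucc)) μ :=
        hIb2q.add (integrable_finset_sum _ fun i _ => hIS1 i)
      have hA2 : Integrable (fun ω => ((1 - η * (v (m + 1) ω) ^ 2) ^ 2 * ‖u (m + 1) ω‖ ^ 2
          + ∑ i : Fin d, 2 * (((1 - η * (v (m + 1) ω) ^ 2) * u (m + 1) ω i)
              * ξ (m + 2) ω i.castSucc))
          - ∑ i : Fin d, 2 * (((1 - η * (v (m + 1) ω) ^ 2) * u (m + 1) ω i)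
              * ξ (m + 1) ω i.castSucc)) μ :=
        hA1.sub (integrable_finset_sum _ fun i _ => hIS2 i)
      rw [hptQ]
      rw [integral_add hA2 (integrable_finset_sum _ fun i _ => hIS3 i),
        integral_sub hA1 (integrable_finset_sum _ fun i _ => hIS2 i),
        integral_add hIb2q (integrable_finset_sum _ fun i _ => hIS1 i),
        integral_finset_sum _ (fun i _ => hIS1 i), integral_finset_sum _ (fun i _ => hIS2 i),
        integral_finset_sum _ (fun i _ => hIS3 i), hS1val, hS2val, hS3val]
      ring
    -- bound the quadratic term
    have hIv2q : Integrable (fun ω => (v (m + 1) ω) ^ 2 * ‖u (m + 1) ω‖ ^ 2) μ := by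
      refine hIB _ (((hmv (m + 1)).pow_const 2).mul (hmq (m + 1))) ((K * K) * (K * K)) ?_
      filter_upwards [hGae] with ω hG
      refine abs_mul_le' (K * K) (K * K) ?_ (hKq (m + 1) ω)
      have h := hKv ω hG (m + 1)
      have h2 : |(v (m + 1) ω) ^ 2| = |v (m + 1) ω| * |v (m + 1) ω| := by
        rw [← abs_mul]; congr 1; ring
      rw [h2]
      exact mul_le_mul h h (abs_nonneg _) hK0
    have hT1 : ∫ ω, (1 - η * (v (m + 1) ω) ^ 2) ^ 2 * ‖u (m + 1) ω‖ ^ 2 ∂μ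
        ≤ ∫ ω, ‖u (m + 1) ω‖ ^ 2 ∂μ
          - η * ∫ ω, (v (m + 1) ω) ^ 2 * ‖u (m + 1) ω‖ ^ 2 ∂μ := by
      have hmono : ∀ᵐ ω ∂μ, (1 - η * (v (m + 1) ω) ^ 2) ^ 2 * ‖u (m + 1) ω‖ ^ 2
          ≤ ‖u (m + 1) ω‖ ^ 2 - η * ((v (m + 1) ω) ^ 2 * ‖u (m + 1) ω‖ ^ 2) := by
        filter_upwards [hGae] with ω hG
        have hb := hb01 ω hG (m + 1)
        have hq := hqpos (m + 1) ω
        nlinarith [mul_nonneg (mul_nonneg hb.1 (sub_nonneg.mpr hb.2)) hq]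
      have hIηv2q : Integrable (fun ω =>
          η * ((v (m + 1) ω) ^ 2 * ‖u (m + 1) ω‖ ^ 2)) μ := hIv2q.const_mul η
      have hIsub : Integrable (fun ω => ‖u (m + 1) ω‖ ^ 2
          - η * ((v (m + 1) ω) ^ 2 * ‖u (m + 1) ω‖ ^ 2)) μ := (hintq (m + 1)).sub hIηv2q
      have h := integral_mono_ae hIb2q hIsub hmono
      rwa [integral_sub (hintq (m + 1)) hIηv2q, integral_const_mul] at h
    -- split the quadratic term
    have hIv2G : Integrable (fun ω => (v (m + 1) ω) ^ 2 * (‖u (m + 1) ω‖ ^ 2 - α * D)) μ := by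
      refine hIB _ (((hmv (m + 1)).pow_const 2).mul ((hmq (m + 1)).sub measurable_const))
        ((K * K) * (K * K + α * D)) ?_
      filter_upwards [hGae] with ω hG
      refine abs_mul_le' (K * K) (K * K + α * D) ?_ ?_
      · have h := hKv ω hG (m + 1)
        have h2 : |(v (m + 1) ω) ^ 2| = |v (m + 1) ω| * |v (m + 1) ω| := by
          rw [← abs_mul]; congr 1; ring
        rw [h2]
        exact mul_le_mul h h (abs_nonneg _) hK0
      · have h2 : |α * D| = α * D := abs_of_nonneg (by positivity)
        calc |‖u (m + 1) ω‖ ^ 2 - α * D| ≤ |‖u (m + 1) ω‖ ^ 2| + |α * D| := abs_sub _ _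
          _ ≤ K * K + α * D := by rw [h2]; exact add_le_add (hKq (m + 1) ω) le_rfl
    have hsplit : ∫ ω, (v (m + 1) ω) ^ 2 * ‖u (m + 1) ω‖ ^ 2 ∂μ
        = ∫ ω, (v (m + 1) ω) ^ 2 * (‖u (m + 1) ω‖ ^ 2 - α * D) ∂μ
          + α * D * ∫ ω, (v (m + 1) ω) ^ 2 ∂μ := by
      have hpt : (fun ω => (v (m + 1) ω) ^ 2 * ‖u (m + 1) ω‖ ^ 2)
          = fun ω => (v (m + 1) ω) ^ 2 * (‖u (m + 1) ω‖ ^ 2 - α * D)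
            + (α * D) * (v (m + 1) ω) ^ 2 := funext fun ω => by ring
      rw [hpt, integral_add hIv2G ((hintv2 (m + 1)).const_mul _), integral_const_mul]
    -- lower bound on the centered quadratic term via the conditional variance
    have hG0 : ∫ ω, (‖u (m + 1) ω‖ ^ 2 - α * D) ∂μ
        = ∫ ω, ‖u (m + 1) ω‖ ^ 2 ∂μ - α * D := by
      rw [integral_sub (hintq (m + 1)) (integrable_const _), integral_const]
      simp [measure_univ]
    have hIW2G : Integrable (fun ω =>
        ((1 - η * ‖u m ω‖ ^ 2) * v m ω - ξ m ω (Fin.last d)) ^ 2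
          * (‖u (m + 1) ω‖ ^ 2 - α * D)) μ := by
      have hmW : Measurable (fun ω => (1 - η * ‖u m ω‖ ^ 2) * v m ω - ξ m ω (Fin.last d)) :=
        ((measurable_const.sub (measurable_const.mul (hmq m))).mul (hmv m)).sub
          (hmc m (Fin.last d))
      refine hIB _ ((hmW.pow_const 2).mul ((hmq (m + 1)).sub measurable_const))
        (((1 * K + K) * (1 * K + K)) * (K * K + α * D)) ?_
      filter_upwards [hGae] with ω hG
      have hW : |(1 - η * ‖u m ω‖ ^ 2) * v m ω - ξ m ω (Fin.last d)| ≤ 1 * K + K := by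
        have h1 : |(1 - η * ‖u m ω‖ ^ 2) * v m ω| ≤ 1 * K := by
          refine abs_mul_le' 1 K ?_ (hKv ω hG m)
          have h := hηq m ω
          rw [abs_of_nonneg (by linarith [h.2] : (0:ℝ) ≤ 1 - η * ‖u m ω‖ ^ 2)]
          linarith [h.1, sq_nonneg α]
        calc |(1 - η * ‖u m ω‖ ^ 2) * v m ω - ξ m ω (Fin.last d)|
            ≤ |(1 - η * ‖u m ω‖ ^ 2) * v m ω| + |ξ m ω (Fin.last d)| := abs_sub _ _
          _ ≤ 1 * K + K := add_le_add h1 (hKξ ω hG m (Fin.last d))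
      refine abs_mul_le' ((1 * K + K) * (1 * K + K)) (K * K + α * D) ?_ ?_
      · have h2 : |((1 - η * ‖u m ω‖ ^ 2) * v m ω - ξ m ω (Fin.last d)) ^ 2|
            = |(1 - η * ‖u m ω‖ ^ 2) * v m ω - ξ m ω (Fin.last d)|
              * |(1 - η * ‖u m ω‖ ^ 2) * v m ω - ξ m ω (Fin.last d)| := by
          rw [← abs_mul]; congr 1; ring
        rw [h2]
        exact mul_le_mul hW hW (abs_nonneg _) (by linarith)
      · have h2 : |α * D| = α * D := abs_of_nonneg (by positivity)
        calc |‖u (m + 1) ω‖ ^ 2 - α * D| ≤ |‖u (m + 1) ω‖ ^ 2| + |α * D| := abs_sub _ _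
          _ ≤ K * K + α * D := by rw [h2]; exact add_le_add (hKq (m + 1) ω) le_rfl
    have hIWGζ : Integrable (fun ω =>
        (((1 - η * ‖u m ω‖ ^ 2) * v m ω - ξ m ω (Fin.last d))
          * (‖u (m + 1) ω‖ ^ 2 - α * D)) * ξ (m + 1) ω (Fin.last d)) μ := by
      have hmW : Measurable (fun ω => (1 - η * ‖u m ω‖ ^ 2) * v m ω - ξ m ω (Fin.last d)) :=
        ((measurable_const.sub (measurable_const.mul (hmq m))).mul (hmv m)).sub
          (hmc m (Fin.last d))
      refine hIB _ ((hmW.mul ((hmq (m + 1)).sub measurable_const)).mul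
        (hmc (m + 1) (Fin.last d))) (((1 * K + K) * (K * K + α * D)) * K) ?_
      filter_upwards [hGae] with ω hG
      refine abs_mul_le' ((1 * K + K) * (K * K + α * D)) K ?_ (hKξ ω hG (m + 1) (Fin.last d))
      refine abs_mul_le' (1 * K + K) (K * K + α * D) ?_ ?_
      · have h1 : |(1 - η * ‖u m ω‖ ^ 2) * v m ω| ≤ 1 * K := by
          refine abs_mul_le' 1 K ?_ (hKv ω hG m)
          have h := hηq m ω
          rw [abs_of_nonneg (by linarith [h.2] : (0:ℝ) ≤ 1 - η * ‖u m ω‖ ^ 2)]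
          linarith [h.1, sq_nonneg α]
        calc |(1 - η * ‖u m ω‖ ^ 2) * v m ω - ξ m ω (Fin.last d)|
            ≤ |(1 - η * ‖u m ω‖ ^ 2) * v m ω| + |ξ m ω (Fin.last d)| := abs_sub _ _
          _ ≤ 1 * K + K := add_le_add h1 (hKξ ω hG m (Fin.last d))
      · have h2 : |α * D| = α * D := abs_of_nonneg (by positivity)
        calc |‖u (m + 1) ω‖ ^ 2 - α * D| ≤ |‖u (m + 1) ω‖ ^ 2| + |α * D| := abs_sub _ _
          _ ≤ K * K + α * D := by rw [h2]; exact add_le_add (hKq (m + 1) ω) le_rfl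
    have hW2G : 0 ≤ ∫ ω, ((1 - η * ‖u m ω‖ ^ 2) * v m ω - ξ m ω (Fin.last d)) ^ 2
        * (‖u (m + 1) ω‖ ^ 2 - α * D) ∂μ :=
      integral_nonneg fun ω => mul_nonneg (sq_nonneg _) (by linarith [hq1 (m + 1) ω])
    have hv2G : σ ^ 2 * (∫ ω, ‖u (m + 1) ω‖ ^ 2 ∂μ - α * D)
        ≤ ∫ ω, (v (m + 1) ω) ^ 2 * (‖u (m + 1) ω‖ ^ 2 - α * D) ∂μ := by
      have hpt : ∀ᵐ ω ∂μ, (v (m + 1) ω) ^ 2 * (‖u (m + 1) ω‖ ^ 2 - α * D)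
          = ((1 - η * ‖u m ω‖ ^ 2) * v m ω - ξ m ω (Fin.last d)) ^ 2
              * (‖u (m + 1) ω‖ ^ 2 - α * D)
            + 2 * ((((1 - η * ‖u m ω‖ ^ 2) * v m ω - ξ m ω (Fin.last d))
                * (‖u (m + 1) ω‖ ^ 2 - α * D)) * ξ (m + 1) ω (Fin.last d))
            + σ ^ 2 * (‖u (m + 1) ω‖ ^ 2 - α * D) := by
        filter_upwards [hGae] with ω hG
        have hζ2 : (ξ (m + 1) ω (Fin.last d)) ^ 2 = σ ^ 2 := by
          rcases hG (m + 1) (Fin.last d) with h | h <;> rw [h] <;> ring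
        rw [hvrec m ω]
        linear_combination (‖u (m + 1) ω‖ ^ 2 - α * D) * hζ2
      have hIG : Integrable (fun ω => ‖u (m + 1) ω‖ ^ 2 - α * D) μ :=
        (hintq (m + 1)).sub (integrable_const _)
      have hIσG : Integrable (fun ω => σ ^ 2 * (‖u (m + 1) ω‖ ^ 2 - α * D)) μ :=
        hIG.const_mul _
      have hI2WGζ : Integrable (fun ω =>
          2 * ((((1 - η * ‖u m ω‖ ^ 2) * v m ω - ξ m ω (Fin.last d))
            * (‖u (m + 1) ω‖ ^ 2 - α * D)) * ξ (m + 1) ω (Fin.last d))) μ := hIWGζ.const_mul 2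
      have hIsum : Integrable (fun ω =>
          ((1 - η * ‖u m ω‖ ^ 2) * v m ω - ξ m ω (Fin.last d)) ^ 2
              * (‖u (m + 1) ω‖ ^ 2 - α * D)
            + 2 * ((((1 - η * ‖u m ω‖ ^ 2) * v m ω - ξ m ω (Fin.last d))
                * (‖u (m + 1) ω‖ ^ 2 - α * D)) * ξ (m + 1) ω (Fin.last d))) μ :=
        hIW2G.add hI2WGζ
      rw [integral_congr_ae hpt, integral_add hIsum hIσG,
        integral_add hIW2G hI2WGζ, integral_const_mul, hZ4, integral_const_mul, hG0]
      linarith [hW2G]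
    -- assemble
    have hVpos : 0 ≤ ∫ ω, (v (m + 1) ω) ^ 2 ∂μ := integral_nonneg fun ω => sq_nonneg _
    have hIbv := hIbval (m + 1)
    have e3 : ∫ ω, ‖u (m + 2) ω‖ ^ 2 ∂μ
        = ∫ ω, (1 - η * (v (m + 1) ω) ^ 2) ^ 2 * ‖u (m + 1) ω‖ ^ 2 ∂μ
          + 2 * (d : ℝ) * σ ^ 2 * (η * ∫ ω, (v (m + 1) ω) ^ 2 ∂μ) := by
      rw [hXval, hIbv]
      ring
    have e5 : η * ∫ ω, (v (m + 1) ω) ^ 2 * ‖u (m + 1) ω‖ ^ 2 ∂μ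
        = η * ∫ ω, (v (m + 1) ω) ^ 2 * (‖u (m + 1) ω‖ ^ 2 - α * D) ∂μ
          + α * D * (η * ∫ ω, (v (m + 1) ω) ^ 2 ∂μ) := by
      rw [hsplit]
      ring
    have e6 : η * σ ^ 2 * (∫ ω, ‖u (m + 1) ω‖ ^ 2 ∂μ - α * D)
        ≤ η * ∫ ω, (v (m + 1) ω) ^ 2 * (‖u (m + 1) ω‖ ^ 2 - α * D) ∂μ := by
      have := mul_le_mul_of_nonneg_left hv2G hη0.le
      calc η * σ ^ 2 * (∫ ω, ‖u (m + 1) ω‖ ^ 2 ∂μ - α * D)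
          = η * (σ ^ 2 * (∫ ω, ‖u (m + 1) ω‖ ^ 2 ∂μ - α * D)) := by ring
        _ ≤ η * ∫ ω, (v (m + 1) ω) ^ 2 * (‖u (m + 1) ω‖ ^ 2 - α * D) ∂μ := this
    have e7 : 2 * (d : ℝ) * σ ^ 2 * (η * ∫ ω, (v (m + 1) ω) ^ 2 ∂μ)
        ≤ α * D * (η * ∫ ω, (v (m + 1) ω) ^ 2 ∂μ) :=
      mul_le_mul_of_nonneg_right h2d (mul_nonneg hη0.le hVpos)
    linarith [e3, hT1, e5, e6, e7]
  -- conclusion: geometric decay and the limit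
  have hxge : ∀ k, α * D ≤ ∫ ω, ‖u k ω‖ ^ 2 ∂μ := by
    intro k
    have h1 : ∫ _ω, (α * D) ∂μ ≤ ∫ ω, ‖u k ω‖ ^ 2 ∂μ :=
      integral_mono (integrable_const _) (hintq k) (fun ω => (hq1 k ω).le)
    simpa [measure_univ] using h1
  have hρ0 : 0 < η * σ ^ 2 := by positivity
  have hρ1 : η * σ ^ 2 < 1 := by
    have h1 : η * σ ^ 2 ≤ η * (α ^ 3 * D / 2) := mul_le_mul_of_nonneg_left hσ3 hη0.le
    have h2 : η * (α ^ 3 * D / 2) = α ^ 4 / 4 := by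
      rw [hη]
      field_simp
      ring
    have h3 : α ^ 4 < 1 := pow_lt_one₀ hα0.le hα1 (by norm_num)
    linarith
  have hr0 : 0 ≤ 1 - η * σ ^ 2 := by linarith
  have hr1 : 1 - η * σ ^ 2 < 1 := by linarith
  have hgeo : ∀ j : ℕ, ∫ ω, ‖u (j + 1) ω‖ ^ 2 ∂μ - α * D
      ≤ (1 - η * σ ^ 2) ^ j * (∫ ω, ‖u 1 ω‖ ^ 2 ∂μ - α * D) := by
    intro j
    induction j with
    | zero => simp
    | succ j ih =>
      have h := hstep j
      calc ∫ ω, ‖u (j + 1 + 1) ω‖ ^ 2 ∂μ - α * D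
          ≤ (1 - η * σ ^ 2) * (∫ ω, ‖u (j + 1) ω‖ ^ 2 ∂μ - α * D) := h
        _ ≤ (1 - η * σ ^ 2) * ((1 - η * σ ^ 2) ^ j * (∫ ω, ‖u 1 ω‖ ^ 2 ∂μ - α * D)) :=
            mul_le_mul_of_nonneg_left ih hr0
        _ = (1 - η * σ ^ 2) ^ (j + 1) * (∫ ω, ‖u 1 ω‖ ^ 2 ∂μ - α * D) := by ring
  have htend0 : Tendsto (fun j : ℕ => α * D
      + (1 - η * σ ^ 2) ^ j * (∫ ω, ‖u 1 ω‖ ^ 2 ∂μ - α * D)) atTop (nhds (α * D)) := by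
    have h1 := (tendsto_pow_atTop_nhds_zero_of_lt_one hr0 hr1).mul_const
      (∫ ω, ‖u 1 ω‖ ^ 2 ∂μ - α * D)
    have h2 := tendsto_const_nhds (x := α * D) (f := atTop (α := ℕ)) |>.add h1
    simpa using h2
  have htend1 : Tendsto (fun j : ℕ => ∫ ω, ‖u (j + 1) ω‖ ^ 2 ∂μ) atTop (nhds (α * D)) := by
    refine tendsto_of_tendsto_of_tendsto_of_le_of_le tendsto_const_nhds htend0
      (fun j => hxge (j + 1)) (fun j => by linarith [hgeo j])
  have htend : Tendsto (fun n : ℕ => ∫ ω, ‖u n ω‖ ^ 2 ∂μ) atTop (nhds (α * D)) :=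
    (tendsto_add_atTop_iff_nat 1).mp htend1
  exact le_of_eq htend.limsup_eq
end

section
/- Let w ∈ ℝ^d evolve with w_{k+1} = ρ_k·w_k + ε_k, where the ρ_k ∈ ℝ are deterministic scalars, and let {ξ_k} be a family of independent zero-mean d-dimensional random vectors with E[‖ξ_k‖²] = d·σ² for all k. Suppose ε₀ = ξ₀ and ε_k = ξ_k − ξ_{k−1} for k ≥ 1 (anticorrelated noise). Then, with empty products equal to 1, E[‖w_{k+1}‖²] = (Π_{j=0}^{k} ρ_j²)·‖w₀‖² + (1 + Σ_{i=0}^{k−1} (1 − ρ_{i+1})²·Π_{j=i+2}^{k} ρ_j²)·d·σ². -/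
open MeasureTheory ProbabilityTheory Filter

section Auxiliary

variable {d : ℕ} {Ω : Type*} [MeasurableSpace Ω] {μ : Measure Ω} [IsProbabilityMeasure μ]

private theorem aux_inner_integrable (ξ η : Ω → EuclideanSpace ℝ (Fin d))
    (hξ : MemLp ξ 2 μ) (hη : MemLp η 2 μ) :
    Integrable (fun ω => (inner ℝ (ξ ω) (η ω) : ℝ)) μ := by
  have hb : Integrable (fun ω => ‖ξ ω‖ * ‖η ω‖) μ := by
    have h := (hη.norm.smul hξ.norm (p := 2) (q := 2) (r := 1))
    exact memLp_one_iff_integrable.mp h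
  refine hb.mono' (hξ.1.inner hη.1) ?_
  filter_upwards with ω
  exact norm_inner_le_norm _ _

private theorem aux_cross_zero (ξ η : Ω → EuclideanSpace ℝ (Fin d))
    (hξ : MemLp ξ 2 μ) (hη : MemLp η 2 μ)
    (hind : IndepFun ξ η μ) (hmξ : ∫ ω, ξ ω ∂μ = 0) :
    ∫ ω, (inner ℝ (ξ ω) (η ω) : ℝ) ∂μ = 0 := by
  have hcoord : ∀ (f : Ω → EuclideanSpace ℝ (Fin d)), MemLp f 2 μ → ∀ i : Fin d,
      Integrable (fun ω => f ω i) μ := fun f hf i =>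
    ((EuclideanSpace.proj i (𝕜 := ℝ)).comp_memLp' hf).integrable one_le_two
  have hinner : ∀ ω, (inner ℝ (ξ ω) (η ω) : ℝ) = ∑ i, ξ ω i * η ω i := by
    intro ω; simp [PiLp.inner_apply, RCLike.inner_apply, conj_trivial]
    exact Finset.sum_congr rfl fun _ _ => mul_comm _ _
  simp only [hinner]
  rw [integral_finset_sum]
  · refine Finset.sum_eq_zero fun i _ => ?_
    have hI : IndepFun (fun ω => ξ ω i) (fun ω => η ω i) μ :=
      hind.comp (EuclideanSpace.proj i (𝕜 := ℝ)).continuous.measurable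
        (EuclideanSpace.proj i (𝕜 := ℝ)).continuous.measurable
    rw [show (∫ ω, ξ ω i * η ω i ∂μ) = (∫ ω, ξ ω i ∂μ) * ∫ ω, η ω i ∂μ from
      hI.integral_mul_eq_mul_integral (hcoord ξ hξ i).1 (hcoord η hη i).1]
    have : ∫ ω, ξ ω i ∂μ = 0 := by
      have h := (EuclideanSpace.proj i (𝕜 := ℝ)).integral_comp_comm (hξ.integrable one_le_two)
      simpa [hmξ] using h
    rw [this, zero_mul]
  · exact fun i _ => (hind.comp (EuclideanSpace.proj i (𝕜 := ℝ)).continuous.measurable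
      (EuclideanSpace.proj i (𝕜 := ℝ)).continuous.measurable).integrable_mul
      (hcoord ξ hξ i) (hcoord η hη i)

private theorem aux_second_moment_sum (ξ : ℕ → Ω → EuclideanSpace ℝ (Fin d))
    (hL2 : ∀ k, MemLp (ξ k) 2 μ)
    (hindep : iIndepFun ξ μ)
    (hmean : ∀ k, ∫ ω, ξ k ω ∂μ = 0)
    (v : EuclideanSpace ℝ (Fin d)) (c : ℕ → ℝ) (n : ℕ) :
    ∫ ω, ‖v + ∑ m ∈ Finset.range n, c m • ξ m ω‖ ^ 2 ∂μ
      = ‖v‖ ^ 2 + ∑ m ∈ Finset.range n, (c m) ^ 2 * ∫ ω, ‖ξ m ω‖ ^ 2 ∂μ := by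
  have hint : ∀ m l : ℕ, Integrable (fun ω => (inner ℝ (ξ m ω) (ξ l ω) : ℝ)) μ :=
    fun m l => aux_inner_integrable _ _ (hL2 m) (hL2 l)
  have hexp : ∀ ω, ‖v + ∑ m ∈ Finset.range n, c m • ξ m ω‖ ^ 2
      = ‖v‖ ^ 2 + (∑ m ∈ Finset.range n, (2 * c m) * (inner ℝ v (ξ m ω) : ℝ))
        + ∑ m ∈ Finset.range n, ∑ l ∈ Finset.range n,
            (c m * c l) * (inner ℝ (ξ m ω) (ξ l ω) : ℝ) := by
    intro ω
    rw [norm_add_sq_real]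
    congr 1
    · congr 1
      rw [inner_sum, Finset.mul_sum]
      refine Finset.sum_congr rfl fun m _ => ?_
      rw [real_inner_smul_right]; ring
    · rw [← real_inner_self_eq_norm_sq, sum_inner]
      refine Finset.sum_congr rfl fun m _ => ?_
      rw [real_inner_smul_left, inner_sum, Finset.mul_sum]
      refine Finset.sum_congr rfl fun l _ => ?_
      rw [real_inner_smul_right]; ring
  simp only [hexp]
  have i1 : Integrable (fun ω => ∑ m ∈ Finset.range n,
      (2 * c m) * (inner ℝ v (ξ m ω) : ℝ)) μ :=
    integrable_finset_sum _ fun m _ =>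
      (((hL2 m).integrable one_le_two).const_inner v).const_mul _
  have i2 : Integrable (fun ω => ∑ m ∈ Finset.range n, ∑ l ∈ Finset.range n,
      (c m * c l) * (inner ℝ (ξ m ω) (ξ l ω) : ℝ)) μ :=
    integrable_finset_sum _ fun m _ => integrable_finset_sum _ fun l _ =>
      (hint m l).const_mul _
  have h1 := integral_add (μ := μ)
    (f := fun ω => ‖v‖ ^ 2 + ∑ m ∈ Finset.range n, (2 * c m) * (inner ℝ v (ξ m ω) : ℝ))
    (g := fun ω => ∑ m ∈ Finset.range n, ∑ l ∈ Finset.range n,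
      (c m * c l) * (inner ℝ (ξ m ω) (ξ l ω) : ℝ))
    ((integrable_const _).add i1) i2
  have h2 := integral_add (μ := μ)
    (f := fun _ => ‖v‖ ^ 2)
    (g := fun ω => ∑ m ∈ Finset.range n, (2 * c m) * (inner ℝ v (ξ m ω) : ℝ))
    (integrable_const _) i1
  rw [h1, h2, integral_const]
  simp only [probReal_univ, measure_univ, ENNReal.toReal_one, smul_eq_mul, one_mul]
  have e1 : ∫ ω, (∑ m ∈ Finset.range n, (2 * c m) * (inner ℝ v (ξ m ω) : ℝ)) ∂μ = 0 := by
    rw [integral_finset_sum _ fun m _ =>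
      (((hL2 m).integrable one_le_two).const_inner v).const_mul _]
    refine Finset.sum_eq_zero fun m _ => ?_
    rw [integral_const_mul, integral_inner ((hL2 m).integrable one_le_two), hmean m,
      inner_zero_right, mul_zero]
  have e2 : ∫ ω, (∑ m ∈ Finset.range n, ∑ l ∈ Finset.range n,
      (c m * c l) * (inner ℝ (ξ m ω) (ξ l ω) : ℝ)) ∂μ
      = ∑ m ∈ Finset.range n, (c m) ^ 2 * ∫ ω, ‖ξ m ω‖ ^ 2 ∂μ := by
    rw [integral_finset_sum _ fun m _ => integrable_finset_sum _ fun l _ =>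
      (hint m l).const_mul _]
    refine Finset.sum_congr rfl fun m hm => ?_
    rw [integral_finset_sum _ fun l _ => (hint m l).const_mul _]
    rw [Finset.sum_eq_single m]
    · rw [integral_const_mul]
      have hns : ∀ ω, (inner ℝ (ξ m ω) (ξ m ω) : ℝ) = ‖ξ m ω‖ ^ 2 := fun ω =>
        real_inner_self_eq_norm_sq _
      simp only [hns]; ring_nf
    · intro l _ hlm
      rw [integral_const_mul,
        aux_cross_zero _ _ (hL2 m) (hL2 l) (hindep.indepFun (Ne.symm hlm)) (hmean m), mul_zero]
    · intro hm2; exact absurd hm hm2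
  rw [e1, e2, add_zero]

end Auxiliary

/-- Coefficient of `ξ m` in the expansion of `w (k+1)`. -/
noncomputable def anticorrCoeff (ρ : ℕ → ℝ) (k m : ℕ) : ℝ :=
  if m = k then 1 else (ρ (m + 1) - 1) * ∏ j ∈ Finset.Icc (m + 2) k, ρ j

theorem anticorr_repr {d : ℕ} {Ω : Type*}
    (ρ : ℕ → ℝ) (ξ : ℕ → Ω → EuclideanSpace ℝ (Fin d))
    (ε : ℕ → Ω → EuclideanSpace ℝ (Fin d))
    (hε0 : ∀ ω, ε 0 ω = ξ 0 ω)
    (hε : ∀ k ω, ε (k + 1) ω = ξ (k + 1) ω - ξ k ω)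
    (w0 : EuclideanSpace ℝ (Fin d)) (w : ℕ → Ω → EuclideanSpace ℝ (Fin d))
    (hw0 : ∀ ω, w 0 ω = w0)
    (hrec : ∀ k ω, w (k + 1) ω = ρ k • w k ω + ε k ω) (k : ℕ) (ω : Ω) :
    w (k + 1) ω = (∏ j ∈ Finset.range (k + 1), ρ j) • w0
      + ∑ m ∈ Finset.range (k + 1), anticorrCoeff ρ k m • ξ m ω := by
  induction k with
  | zero =>
      simp [hrec 0 ω, hw0 ω, hε0 ω, anticorrCoeff]
  | succ k ih =>
      rw [hrec (k + 1) ω, ih, hε k ω]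
      have hc1 : anticorrCoeff ρ (k + 1) (k + 1) = 1 := by simp [anticorrCoeff]
      have hc2 : anticorrCoeff ρ (k + 1) k = ρ (k + 1) - 1 := by
        simp [anticorrCoeff, Finset.Icc_eq_empty_of_lt (by omega : k + 1 < k + 2)]
      have hck : anticorrCoeff ρ k k = 1 := by simp [anticorrCoeff]
      have hprod : (∏ j ∈ Finset.range (k + 1 + 1), ρ j)
          = ρ (k + 1) * ∏ j ∈ Finset.range (k + 1), ρ j := by
        rw [Finset.prod_range_succ]; ring
      have hsum : (∑ m ∈ Finset.range (k + 1 + 1), anticorrCoeff ρ (k + 1) m • ξ m ω)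
          = (∑ m ∈ Finset.range k, ρ (k + 1) • (anticorrCoeff ρ k m • ξ m ω))
            + (ρ (k + 1) - 1) • ξ k ω + ξ (k + 1) ω := by
        rw [Finset.sum_range_succ, Finset.sum_range_succ, hc1, hc2, one_smul]
        congr 1
        congr 1
        refine Finset.sum_congr rfl fun m hm => ?_
        have hmk := Finset.mem_range.mp hm
        rw [anticorrCoeff, anticorrCoeff, if_neg (by omega : m ≠ k + 1),
          if_neg (by omega : m ≠ k),
          Finset.prod_Icc_succ_top (by omega : m + 2 ≤ k + 1), smul_smul]
        ring_nf
      rw [hprod, hsum, Finset.sum_range_succ, hck, one_smul]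
      simp only [smul_add, Finset.smul_sum, mul_smul, sub_smul, one_smul]
      abel

/-- **Second moment of a scalar-coefficient linear recursion driven by anticorrelated
noise.**  If `w (k+1) = ρ k • w k + ε k` in `ℝ^d` with deterministic scalars `ρ k`,
deterministic initial condition `w₀`, and anticorrelated noise `ε 0 = ξ 0`,
`ε k = ξ k - ξ (k-1)` built from independent zero-mean vectors `ξ k` with
`E[‖ξ k‖²] = d σ²`, then
`E[‖w (k+1)‖²] = (Π_{j=0}^{k} ρ_j²) ‖w₀‖²
  + (1 + Σ_{i=0}^{k-1} (1-ρ_{i+1})² Π_{j=i+2}^{k} ρ_j²) d σ²`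
(empty products equal `1`). -/
theorem second_moment_anticorrelated {d : ℕ} {Ω : Type*} [MeasurableSpace Ω]
    (μ : Measure Ω) [IsProbabilityMeasure μ]
    (ρ : ℕ → ℝ) (σ : ℝ)
    (ξ : ℕ → Ω → EuclideanSpace ℝ (Fin d))
    (hmeas : ∀ k, Measurable (ξ k))
    (hL2 : ∀ k, MemLp (ξ k) 2 μ)
    (hindep : iIndepFun ξ μ)
    (hmean : ∀ k, ∫ ω, ξ k ω ∂μ = 0)
    (hvar : ∀ k, ∫ ω, ‖ξ k ω‖ ^ 2 ∂μ = d * σ ^ 2)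
    (ε : ℕ → Ω → EuclideanSpace ℝ (Fin d))
    (hε0 : ∀ ω, ε 0 ω = ξ 0 ω)
    (hε : ∀ k ω, ε (k + 1) ω = ξ (k + 1) ω - ξ k ω)
    (w0 : EuclideanSpace ℝ (Fin d)) (w : ℕ → Ω → EuclideanSpace ℝ (Fin d))
    (hw0 : ∀ ω, w 0 ω = w0)
    (hrec : ∀ k ω, w (k + 1) ω = ρ k • w k ω + ε k ω) (k : ℕ) :
    ∫ ω, ‖w (k + 1) ω‖ ^ 2 ∂μ
      = (∏ j ∈ Finset.range (k + 1), (ρ j) ^ 2) * ‖w0‖ ^ 2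
        + (1 + ∑ i ∈ Finset.range k,
              (1 - ρ (i + 1)) ^ 2 * ∏ j ∈ Finset.Icc (i + 2) k, (ρ j) ^ 2) * (d * σ ^ 2) := by
  have hrepr := anticorr_repr ρ ξ ε hε0 hε w0 w hw0 hrec k
  calc ∫ ω, ‖w (k + 1) ω‖ ^ 2 ∂μ
      = ∫ ω, ‖(∏ j ∈ Finset.range (k + 1), ρ j) • w0
          + ∑ m ∈ Finset.range (k + 1), anticorrCoeff ρ k m • ξ m ω‖ ^ 2 ∂μ := by
        refine integral_congr_ae (Eventually.of_forall fun ω => ?_)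
        simp only []; rw [hrepr ω]
    _ = ‖(∏ j ∈ Finset.range (k + 1), ρ j) • w0‖ ^ 2
          + ∑ m ∈ Finset.range (k + 1), (anticorrCoeff ρ k m) ^ 2 * ∫ ω, ‖ξ m ω‖ ^ 2 ∂μ :=
        aux_second_moment_sum ξ hL2 hindep hmean _ _ _
    _ = (∏ j ∈ Finset.range (k + 1), (ρ j) ^ 2) * ‖w0‖ ^ 2
          + (1 + ∑ i ∈ Finset.range k,
              (1 - ρ (i + 1)) ^ 2 * ∏ j ∈ Finset.Icc (i + 2) k, (ρ j) ^ 2) * (d * σ ^ 2) := by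
        simp only [hvar]
        congr 1
        · rw [norm_smul, mul_pow, Real.norm_eq_abs, sq_abs, Finset.prod_pow]
        · rw [← Finset.sum_mul]
          congr 1
          rw [Finset.sum_range_succ]
          have hck : anticorrCoeff ρ k k = 1 := by simp [anticorrCoeff]
          rw [hck, one_pow, add_comm]
          congr 1
          refine Finset.sum_congr rfl fun m hm => ?_
          have hmk := Finset.mem_range.mp hm
          rw [anticorrCoeff, if_neg (by omega : m ≠ k), mul_pow, Finset.prod_pow]
          congr 1
          rw [← neg_sub (1 : ℝ), neg_pow, Even.neg_one_pow (by norm_num)]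
          ring
end

section
/- Let w ∈ ℝ^d evolve with w_{k+1} = ρ_k·w_k + ε_k, where the ρ_k are deterministic scalars in [0,1] satisfying Π_{j=0}^{k} ρ_j → 0 as k → ∞, ε₀ = ξ₀ and ε_k = ξ_k − ξ_{k−1} for k ≥ 1, and {ξ_k} are independent zero-mean d-dimensional random vectors with E[‖ξ_k‖²] = d·σ². Then limsup_{k→∞} E[‖w_{k+1}‖²] ≤ 2·d·σ². -/
open MeasureTheory ProbabilityTheory Filter

section AuxAnticorrelated

variable {Ω : Type*} [MeasurableSpace Ω] {μ : Measure Ω} [IsProbabilityMeasure μ] {d : ℕ}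

lemma my_integrable_inner {X Y : Ω → EuclideanSpace ℝ (Fin d)}
    (hX2 : MemLp X 2 μ) (hY2 : MemLp Y 2 μ) :
    Integrable (fun ω => (inner ℝ (X ω) (Y ω) : ℝ)) μ := by
  have h := L2.integrable_inner (𝕜 := ℝ) (hX2.toLp X) (hY2.toLp Y)
  refine h.congr ?_
  filter_upwards [hX2.coeFn_toLp, hY2.coeFn_toLp] with ω h1 h2
  rw [h1, h2]

lemma my_integral_inner_zero {X Y : Ω → EuclideanSpace ℝ (Fin d)}
    (hXm : Measurable X) (hYm : Measurable Y) (hX2 : MemLp X 2 μ) (hY2 : MemLp Y 2 μ)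
    (hXY : IndepFun X Y μ) (hY0 : ∫ ω, Y ω ∂μ = 0) :
    ∫ ω, (inner ℝ (X ω) (Y ω) : ℝ) ∂μ = 0 := by
  have hcoord : ∀ l : Fin d, ∫ ω, X ω l * Y ω l ∂μ = 0 := by
    intro l
    have hφ : Measurable ((EuclideanSpace.proj l : EuclideanSpace ℝ (Fin d) →L[ℝ] ℝ)) :=
      (EuclideanSpace.proj l).continuous.measurable
    have hind : IndepFun (fun ω => X ω l) (fun ω => Y ω l) μ := hXY.comp hφ hφ
    have hXl : Integrable (fun ω => X ω l) μ :=
      (EuclideanSpace.proj l : EuclideanSpace ℝ (Fin d) →L[ℝ] ℝ).integrable_comp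
        (hX2.integrable one_le_two)
    have hYl : Integrable (fun ω => Y ω l) μ :=
      (EuclideanSpace.proj l : EuclideanSpace ℝ (Fin d) →L[ℝ] ℝ).integrable_comp
        (hY2.integrable one_le_two)
    have hmul := hind.integral_mul_eq_mul_integral hXl.aestronglyMeasurable hYl.aestronglyMeasurable
    rw [show (∫ ω, X ω l * Y ω l ∂μ) = integral μ ((fun ω => X ω l) * fun ω => Y ω l) from rfl,
      hmul]
    have : ∫ ω, Y ω l ∂μ = 0 := by
      have h := (EuclideanSpace.proj l : EuclideanSpace ℝ (Fin d) →L[ℝ] ℝ).integral_comp_comm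
        (hY2.integrable one_le_two)
      rw [show (∫ ω, Y ω l ∂μ) = ∫ x, (EuclideanSpace.proj l) (Y x) ∂μ from rfl, h, hY0]
      simp
    rw [this, mul_zero]
  have hinner : ∀ ω, (inner ℝ (X ω) (Y ω) : ℝ) = ∑ l : Fin d, X ω l * Y ω l := by
    intro ω; rw [PiLp.inner_apply]; exact Finset.sum_congr rfl fun l _ => by simp [mul_comm]
  simp_rw [hinner]
  rw [integral_finset_sum]
  · exact Finset.sum_eq_zero fun l _ => hcoord l
  · intro l _
    have hφ : Measurable ((EuclideanSpace.proj l : EuclideanSpace ℝ (Fin d) →L[ℝ] ℝ)) :=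
      (EuclideanSpace.proj l).continuous.measurable
    exact ((hXY.comp hφ hφ)).integrable_mul
      ((EuclideanSpace.proj l : EuclideanSpace ℝ (Fin d) →L[ℝ] ℝ).integrable_comp
        (hX2.integrable one_le_two))
      ((EuclideanSpace.proj l : EuclideanSpace ℝ (Fin d) →L[ℝ] ℝ).integrable_comp
        (hY2.integrable one_le_two))

lemma my_integral_norm_add_sq {X Y : Ω → EuclideanSpace ℝ (Fin d)}
    (hXm : Measurable X) (hYm : Measurable Y) (hX2 : MemLp X 2 μ) (hY2 : MemLp Y 2 μ)
    (hXY : IndepFun X Y μ) (hY0 : ∫ ω, Y ω ∂μ = 0) :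
    ∫ ω, ‖X ω + Y ω‖ ^ 2 ∂μ = ∫ ω, ‖X ω‖ ^ 2 ∂μ + ∫ ω, ‖Y ω‖ ^ 2 ∂μ := by
  have iX : Integrable (fun ω => ‖X ω‖ ^ 2) μ :=
    (memLp_two_iff_integrable_sq_norm hX2.aestronglyMeasurable).1 hX2
  have iY : Integrable (fun ω => ‖Y ω‖ ^ 2) μ :=
    (memLp_two_iff_integrable_sq_norm hY2.aestronglyMeasurable).1 hY2
  have iI : Integrable (fun ω => (inner ℝ (X ω) (Y ω) : ℝ)) μ := my_integrable_inner hX2 hY2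
  have e : ∀ ω, ‖X ω + Y ω‖ ^ 2 = ‖X ω‖ ^ 2 + 2 * (inner ℝ (X ω) (Y ω) : ℝ) + ‖Y ω‖ ^ 2 :=
    fun ω => norm_add_sq_real _ _
  have iI2 : Integrable (fun ω => 2 * (inner ℝ (X ω) (Y ω) : ℝ)) μ := iI.const_mul 2
  have iXI : Integrable (fun ω => ‖X ω‖ ^ 2 + 2 * (inner ℝ (X ω) (Y ω) : ℝ)) μ := iX.add iI2
  simp_rw [e]
  rw [integral_add iXI iY, integral_add iX iI2,
    integral_const_mul, my_integral_inner_zero hXm hYm hX2 hY2 hXY hY0, mul_zero, add_zero]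

end AuxAnticorrelated

/-- **Limit bound on the second moment for anticorrelated noise.**  If
`w (k+1) = ρ k • w k + ε k` in `ℝ^d` with deterministic scalars `ρ k ∈ [0,1]` whose
running products `Π_{j=0}^{k} ρ j` tend to `0`, deterministic initial condition `w₀`, and
anticorrelated noise `ε 0 = ξ 0`, `ε k = ξ k - ξ (k-1)` built from independent zero-mean
vectors `ξ k` with `E[‖ξ k‖²] = d σ²`, then `limsup_{k→∞} E[‖w (k+1)‖²] ≤ 2 d σ²`. -/
theorem limsup_second_moment_anticorrelated {d : ℕ} {Ω : Type*} [MeasurableSpace Ω]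
    (μ : Measure Ω) [IsProbabilityMeasure μ]
    (ρ : ℕ → ℝ) (σ : ℝ)
    (hρ : ∀ k, ρ k ∈ Set.Icc (0 : ℝ) 1)
    (hρprod : Tendsto (fun k : ℕ => ∏ j ∈ Finset.range (k + 1), ρ j) atTop (nhds 0))
    (ξ : ℕ → Ω → EuclideanSpace ℝ (Fin d))
    (hmeas : ∀ k, Measurable (ξ k))
    (hL2 : ∀ k, MemLp (ξ k) 2 μ)
    (hindep : iIndepFun ξ μ)
    (hmean : ∀ k, ∫ ω, ξ k ω ∂μ = 0)
    (hvar : ∀ k, ∫ ω, ‖ξ k ω‖ ^ 2 ∂μ = d * σ ^ 2)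
    (ε : ℕ → Ω → EuclideanSpace ℝ (Fin d))
    (hε0 : ∀ ω, ε 0 ω = ξ 0 ω)
    (hε : ∀ k ω, ε (k + 1) ω = ξ (k + 1) ω - ξ k ω)
    (w0 : EuclideanSpace ℝ (Fin d)) (w : ℕ → Ω → EuclideanSpace ℝ (Fin d))
    (hw0 : ∀ ω, w 0 ω = w0)
    (hrec : ∀ k ω, w (k + 1) ω = ρ k • w k ω + ε k ω) :
    limsup (fun k : ℕ => ∫ ω, ‖w (k + 1) ω‖ ^ 2 ∂μ) atTop ≤ 2 * d * σ ^ 2 := by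
  classical
  have hdσ : (0 : ℝ) ≤ (d : ℝ) * σ ^ 2 := by positivity
  set V : ℕ → Ω → EuclideanSpace ℝ (Fin d) := fun k ω => w (k + 1) ω - ξ k ω with hVdef
  have hV0 : ∀ ω, V 0 ω = ρ 0 • w0 := by
    intro ω
    show w 1 ω - ξ 0 ω = ρ 0 • w0
    rw [hrec 0 ω, hε0 ω, hw0 ω, add_sub_cancel_right]
  have hVrec : ∀ k ω, V (k + 1) ω = ρ (k + 1) • V k ω + (ρ (k + 1) - 1) • ξ k ω := by
    intro k ω
    show w (k + 2) ω - ξ (k + 1) ω = ρ (k + 1) • (w (k + 1) ω - ξ k ω) + (ρ (k + 1) - 1) • ξ k ω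
    rw [hrec (k + 1) ω, hε k ω]
    simp only [smul_sub, sub_smul, one_smul]
    abel
  -- measurability of V
  have hwmeas : ∀ k, Measurable (w k) := by
    intro k
    induction k with
    | zero =>
      have : w 0 = fun _ => w0 := funext hw0
      rw [this]; exact measurable_const
    | succ k ih =>
      have hεm : Measurable (ε k) := by
        cases k with
        | zero =>
          have : ε 0 = ξ 0 := funext hε0
          rw [this]; exact hmeas 0
        | succ m =>
          have : ε (m + 1) = fun ω => ξ (m + 1) ω - ξ m ω := funext (hε m)
          rw [this]; exact (hmeas (m + 1)).sub (hmeas m)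
      have : w (k + 1) = fun ω => ρ k • w k ω + ε k ω := funext (hrec k)
      rw [this]; exact (ih.const_smul (ρ k)).add hεm
  have hVmeas : ∀ k, Measurable (V k) := fun k => (hwmeas (k + 1)).sub (hmeas k)
  -- L2 of V
  have hVL2 : ∀ k, MemLp (V k) 2 μ := by
    intro k
    induction k with
    | zero =>
      have : V 0 = fun _ => ρ 0 • w0 := funext hV0
      rw [this]; exact memLp_const _
    | succ k ih =>
      have : V (k + 1) = fun ω => ρ (k + 1) • V k ω + (ρ (k + 1) - 1) • ξ k ω :=
        funext (hVrec k)
      rw [this]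
      exact (ih.const_smul (ρ (k + 1))).add ((hL2 k).const_smul (ρ (k + 1) - 1))
  -- V k factors through ξ 0, ..., ξ (k-1)
  have hfactor : ∀ k, ∃ ψ : (↥(Finset.range k) → EuclideanSpace ℝ (Fin d)) →
      EuclideanSpace ℝ (Fin d), Measurable ψ ∧ ∀ ω, V k ω = ψ (fun i => ξ i ω) := by
    intro k
    induction k with
    | zero => exact ⟨fun _ => ρ 0 • w0, measurable_const, fun ω => hV0 ω⟩
    | succ k ih =>
      obtain ⟨ψ, hψm, hψ⟩ := ih
      refine ⟨fun g => ρ (k + 1) • ψ (fun i =>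
          g ⟨i.1, Finset.mem_range.2 (lt_trans (Finset.mem_range.1 i.2) (Nat.lt_succ_self k))⟩)
          + (ρ (k + 1) - 1) • g ⟨k, Finset.self_mem_range_succ k⟩, ?_, ?_⟩
      · apply Measurable.add
        · apply Measurable.fun_const_smul
          apply hψm.comp
          exact measurable_pi_lambda _ fun i => measurable_pi_apply _
        · apply Measurable.fun_const_smul
          exact measurable_pi_apply _
      · intro ω
        simp only []
        rw [hVrec k ω, hψ ω]
  have hVindep : ∀ k, IndepFun (V k) (ξ k) μ := by
    intro k
    obtain ⟨ψ, hψm, hψ⟩ := hfactor k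
    have hdisj : Disjoint (Finset.range k) ({k} : Finset ℕ) := by simp
    have h := hindep.indepFun_finset (Finset.range k) {k} hdisj hmeas
    have e1 : V k = ψ ∘ (fun a (i : (Finset.range k : Finset ℕ)) => ξ i a) := funext hψ
    rw [e1]
    exact h.comp hψm (measurable_pi_apply (⟨k, Finset.mem_singleton_self k⟩ : ({k} : Finset ℕ)))
  -- second moment identities
  have hsmul_int : ∀ (c : ℝ) (Z : Ω → EuclideanSpace ℝ (Fin d)),
      ∫ ω, ‖c • Z ω‖ ^ 2 ∂μ = c ^ 2 * ∫ ω, ‖Z ω‖ ^ 2 ∂μ := by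
    intro c Z
    simp_rw [norm_smul, mul_pow, Real.norm_eq_abs, sq_abs]
    rw [integral_const_mul]
  have hw_eq : ∀ k, ∫ ω, ‖w (k + 1) ω‖ ^ 2 ∂μ = (∫ ω, ‖V k ω‖ ^ 2 ∂μ) + d * σ ^ 2 := by
    intro k
    have e : ∀ ω, w (k + 1) ω = V k ω + ξ k ω := fun ω => by
      show w (k + 1) ω = w (k + 1) ω - ξ k ω + ξ k ω
      rw [sub_add_cancel]
    simp_rw [e]
    rw [my_integral_norm_add_sq (hVmeas k) (hmeas k) (hVL2 k) (hL2 k) (hVindep k) (hmean k),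
      hvar k]
  have hVrec2 : ∀ k, ∫ ω, ‖V (k + 1) ω‖ ^ 2 ∂μ
      = ρ (k + 1) ^ 2 * (∫ ω, ‖V k ω‖ ^ 2 ∂μ) + (ρ (k + 1) - 1) ^ 2 * ((d : ℝ) * σ ^ 2) := by
    intro k
    have hXm : Measurable (fun ω => ρ (k + 1) • V k ω) := (hVmeas k).const_smul (ρ (k + 1))
    have hYm : Measurable (fun ω => (ρ (k + 1) - 1) • ξ k ω) := (hmeas k).const_smul (ρ (k + 1) - 1)
    have hX2 : MemLp (fun ω => ρ (k + 1) • V k ω) 2 μ := (hVL2 k).const_smul (ρ (k + 1))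
    have hY2 : MemLp (fun ω => (ρ (k + 1) - 1) • ξ k ω) 2 μ := (hL2 k).const_smul (ρ (k + 1) - 1)
    have hind : IndepFun (fun ω => ρ (k + 1) • V k ω) (fun ω => (ρ (k + 1) - 1) • ξ k ω) μ :=
      (hVindep k).comp
        (continuous_const_smul (ρ (k + 1)) :
          Continuous fun x : EuclideanSpace ℝ (Fin d) => ρ (k + 1) • x).measurable
        (continuous_const_smul (ρ (k + 1) - 1) :
          Continuous fun x : EuclideanSpace ℝ (Fin d) => (ρ (k + 1) - 1) • x).measurable
    have hY0 : ∫ ω, (ρ (k + 1) - 1) • ξ k ω ∂μ = 0 := by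
      rw [integral_smul, hmean k, smul_zero]
    simp_rw [hVrec k]
    rw [my_integral_norm_add_sq hXm hYm hX2 hY2 hind hY0, hsmul_int, hsmul_int, hvar k]
  -- induction bound
  set P : ℕ → ℝ := fun k => ∏ j ∈ Finset.range (k + 1), ρ j with hPdef
  have hPnonneg : ∀ k, 0 ≤ P k := fun k => Finset.prod_nonneg fun j _ => (hρ j).1
  have hVnonneg : ∀ k, 0 ≤ ∫ ω, ‖V k ω‖ ^ 2 ∂μ :=
    fun k => integral_nonneg fun ω => by positivity
  have hbound : ∀ k, ∫ ω, ‖V k ω‖ ^ 2 ∂μ ≤ P k * ‖w0‖ ^ 2 + (d : ℝ) * σ ^ 2 := by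
    intro k
    induction k with
    | zero =>
      have e0 : ∫ ω, ‖V 0 ω‖ ^ 2 ∂μ = ‖ρ 0 • w0‖ ^ 2 := by
        simp_rw [hV0]
        simp [measure_univ]
      rw [e0, norm_smul, mul_pow, Real.norm_eq_abs, sq_abs]
      have hP0 : P 0 = ρ 0 := by simp [hPdef]
      have h1 : ρ 0 ^ 2 * ‖w0‖ ^ 2 ≤ ρ 0 * ‖w0‖ ^ 2 := by
        have h01 := (hρ 0).1; have h02 := (hρ 0).2
        have hsq : ρ 0 ^ 2 ≤ ρ 0 := by nlinarith
        exact mul_le_mul_of_nonneg_right hsq (sq_nonneg _)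
      rw [hP0]; linarith
    | succ k ih =>
      rw [hVrec2 k]
      have h0 := (hρ (k + 1)).1
      have h1 := (hρ (k + 1)).2
      have hq : P k * ‖w0‖ ^ 2 + (d : ℝ) * σ ^ 2 ≥ 0 := by
        have := hPnonneg k; positivity
      have step1 : ρ (k + 1) ^ 2 * (∫ ω, ‖V k ω‖ ^ 2 ∂μ)
          ≤ ρ (k + 1) * (P k * ‖w0‖ ^ 2 + (d : ℝ) * σ ^ 2) := by
        have h2 : ρ (k + 1) ^ 2 ≤ ρ (k + 1) := by nlinarith
        calc ρ (k + 1) ^ 2 * (∫ ω, ‖V k ω‖ ^ 2 ∂μ)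
            ≤ ρ (k + 1) ^ 2 * (P k * ‖w0‖ ^ 2 + (d : ℝ) * σ ^ 2) := by
              exact mul_le_mul_of_nonneg_left ih (sq_nonneg _)
          _ ≤ ρ (k + 1) * (P k * ‖w0‖ ^ 2 + (d : ℝ) * σ ^ 2) :=
              mul_le_mul_of_nonneg_right h2 hq
      have step2 : (ρ (k + 1) - 1) ^ 2 * ((d : ℝ) * σ ^ 2)
          ≤ (1 - ρ (k + 1)) * ((d : ℝ) * σ ^ 2) := by
        have h2 : (ρ (k + 1) - 1) ^ 2 ≤ 1 - ρ (k + 1) := by nlinarith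
        exact mul_le_mul_of_nonneg_right h2 hdσ
      have hPsucc : P (k + 1) = P k * ρ (k + 1) := by
        simp only [hPdef]
        rw [Finset.prod_range_succ]
      have : ρ (k + 1) * (P k * ‖w0‖ ^ 2 + (d : ℝ) * σ ^ 2)
          + (1 - ρ (k + 1)) * ((d : ℝ) * σ ^ 2)
          = P (k + 1) * ‖w0‖ ^ 2 + (d : ℝ) * σ ^ 2 := by
        rw [hPsucc]; ring
      linarith
  -- final bound
  have hfinal : ∀ k, ∫ ω, ‖w (k + 1) ω‖ ^ 2 ∂μ ≤ P k * ‖w0‖ ^ 2 + 2 * (d : ℝ) * σ ^ 2 := by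
    intro k
    rw [hw_eq k]
    have := hbound k
    linarith
  have htend : Tendsto (fun k => P k * ‖w0‖ ^ 2 + 2 * (d : ℝ) * σ ^ 2) atTop
      (nhds (2 * (d : ℝ) * σ ^ 2)) := by
    have h1 := hρprod.mul_const (‖w0‖ ^ 2)
    have h2 := h1.add_const (2 * (d : ℝ) * σ ^ 2)
    simpa using h2
  have hle : limsup (fun k : ℕ => ∫ ω, ‖w (k + 1) ω‖ ^ 2 ∂μ) atTop
      ≤ limsup (fun k => P k * ‖w0‖ ^ 2 + 2 * (d : ℝ) * σ ^ 2) atTop := by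
    refine limsup_le_limsup (Eventually.of_forall hfinal) ?_ ?_
    · have hb : IsBoundedUnder (· ≥ ·) atTop
          (fun k : ℕ => ∫ ω, ‖w (k + 1) ω‖ ^ 2 ∂μ) :=
        isBoundedUnder_of ⟨0, fun k => integral_nonneg fun ω => by positivity⟩
      exact hb.isCoboundedUnder_le
    · exact htend.isBoundedUnder_le
  calc limsup (fun k : ℕ => ∫ ω, ‖w (k + 1) ω‖ ^ 2 ∂μ) atTop
      ≤ limsup (fun k => P k * ‖w0‖ ^ 2 + 2 * (d : ℝ) * σ ^ 2) atTop := hle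
    _ = 2 * (d : ℝ) * σ ^ 2 := htend.limsup_eq
end

section
/- Let L : ℝ^d → ℝ have continuous fourth-order partial derivatives and β-Lipschitz continuous third-order partial derivatives, and let ξ be a random vector in ℝ^d whose coordinates are independent symmetric Bernoulli variables taking values σ and −σ each with probability 1/2. Then there exists a constant C > 0 depending only on d and β such that for all z ∈ ℝ^d, ‖E[∇L(z + ξ)] − ∇L(z) − (σ²/2)·∇(tr(∇²L))(z)‖ ≤ C·σ³; that is, the expected gradient of the randomly shifted loss equals the gradient of the modified loss L̃(z) = L(z) + (σ²/2)·tr(∇²L(z)) up to an error of order σ³. -/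
open MeasureTheory ProbabilityTheory

/-- The trace of the Hessian of `L` at `z`, `tr(∇²L(z)) = Σⱼ ∂²ⱼⱼ L(z)`. -/
noncomputable def hessTrace {d : ℕ} (L : EuclideanSpace ℝ (Fin d) → ℝ)
    (z : EuclideanSpace ℝ (Fin d)) : ℝ :=
  ∑ j : Fin d, iteratedFDeriv ℝ 2 L z (fun _ => EuclideanSpace.single j 1)


open Metric

noncomputable instance instNACGCLM3 {E F : Type*} [NormedAddCommGroup E] [NormedSpace ℝ E]
    [NormedAddCommGroup F] [NormedSpace ℝ F] :
    NormedAddCommGroup (E →L[ℝ] E →L[ℝ] E →L[ℝ] F) :=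
  ContinuousLinearMap.toNormedAddCommGroup (𝕜 := ℝ) (𝕜₂ := ℝ) (E := E) (F := E →L[ℝ] E →L[ℝ] F)
    (σ₁₂ := RingHom.id ℝ)

noncomputable instance instNSCLM3 {E F : Type*} [NormedAddCommGroup E] [NormedSpace ℝ E]
    [NormedAddCommGroup F] [NormedSpace ℝ F] :
    NormedSpace ℝ (E →L[ℝ] E →L[ℝ] E →L[ℝ] F) :=
  ContinuousLinearMap.toNormedSpace (𝕜 := ℝ) (𝕜₂ := ℝ) (E := E) (F := E →L[ℝ] E →L[ℝ] F)
    (σ₁₂ := RingHom.id ℝ)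

section Taylor
variable {E F : Type*} [NormedAddCommGroup E] [NormedSpace ℝ E]
  [NormedAddCommGroup F] [NormedSpace ℝ F]

lemma taylor2_bound (g : E → F) (g' : E → E →L[ℝ] F) (g'' : E → E →L[ℝ] E →L[ℝ] F) {β : ℝ}
    (hβ : 0 ≤ β)
    (hg : ∀ x, HasFDerivAt g (g' x) x) (hg' : ∀ x, HasFDerivAt g' (g'' x) x)
    (hlip : ∀ x y, ‖g'' x - g'' y‖ ≤ β * ‖x - y‖) (z v : E) :
    ‖g (z + v) - g z - g' z v - (1/2 : ℝ) • (g'' z v v)‖ ≤ β * ‖v‖ ^ 3 := by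
  have hsymm : ∀ a b : E, g'' z a b = g'' z b a := fun a b =>
    second_derivative_symmetric hg (hg' z) a b
  have hconv : Convex ℝ (closedBall z ‖v‖) := convex_closedBall _ _
  set m : E → E →L[ℝ] F := fun x => g' x - g' z - g'' z (x - z) with hm_def
  have hm : ∀ x, HasFDerivAt m (g'' x - g'' z) x := by
    intro x
    have h1 : HasFDerivAt (fun x => g'' z (x - z)) (g'' z) x := by
      have h1' := (g'' z).hasFDerivAt.comp x ((hasFDerivAt_id x).sub_const z)
      rwa [ContinuousLinearMap.comp_id] at h1'
    exact ((hg' x).sub_const (g' z)).sub h1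
  have key1 : ∀ x ∈ closedBall z ‖v‖, ‖m x‖ ≤ β * ‖v‖ * ‖v‖ := by
    intro x hx
    have hb : ∀ y ∈ closedBall z ‖v‖, ‖g'' y - g'' z‖ ≤ β * ‖v‖ := by
      intro y hy
      calc ‖g'' y - g'' z‖ ≤ β * ‖y - z‖ := hlip y z
        _ ≤ β * ‖v‖ := mul_le_mul_of_nonneg_left (by simpa [dist_eq_norm] using hy) hβ
    have hmv := hconv.norm_image_sub_le_of_norm_hasFDerivWithin_le
      (fun y _ => (hm y).hasFDerivWithinAt) hb hx (mem_closedBall_self (norm_nonneg v))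
    have hmz : m z = 0 := by simp [hm_def]
    have hxz : ‖x - z‖ ≤ ‖v‖ := by simpa [dist_eq_norm] using hx
    calc ‖m x‖ = ‖m z - m x‖ := by simp [hmz]
      _ ≤ β * ‖v‖ * ‖x - z‖ := by simpa [norm_sub_rev] using hmv
      _ ≤ β * ‖v‖ * ‖v‖ := mul_le_mul_of_nonneg_left hxz (by positivity)
  -- second step
  set h : E → F := fun x => g x - g z - g' z (x - z) - (1/2 : ℝ) • (g'' z (x - z) (x - z))
    with hh_def
  have hbb : IsBoundedBilinearMap ℝ (fun p : E × E => g'' z p.1 p.2) :=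
    (g'' z).isBoundedBilinearMap
  have hh : ∀ x, HasFDerivAt h (m x) x := by
    intro x
    have hsub : HasFDerivAt (fun y : E => (y - z, y - z))
        ((ContinuousLinearMap.id ℝ E).prod (ContinuousLinearMap.id ℝ E)) x :=
      HasFDerivAt.prodMk (((hasFDerivAt_id x).sub_const z)) (((hasFDerivAt_id x).sub_const z))
    have hq : HasFDerivAt (fun y : E => g'' z (y - z) (y - z))
        ((hbb.deriv (x - z, x - z)).comp
          ((ContinuousLinearMap.id ℝ E).prod (ContinuousLinearMap.id ℝ E))) x :=
      HasFDerivAt.comp (f := fun y : E => (y - z, y - z)) x (hbb.hasFDerivAt (x - z, x - z)) hsub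
    have h1 : HasFDerivAt (fun y => g' z (y - z)) (g' z) x := by
      have h1' := (g' z).hasFDerivAt.comp x ((hasFDerivAt_id x).sub_const z)
      rwa [ContinuousLinearMap.comp_id] at h1'
    have hD := (((hg x).sub_const (g z)).sub h1).sub (hq.const_smul (1/2 : ℝ))
    convert hD using 1
    · rfl
    ext w
    have e1 : g'' z w (x - z) = g'' z (x - z) w := hsymm w (x - z)
    simp only [hm_def, ContinuousLinearMap.coe_sub', Pi.sub_apply,
      ContinuousLinearMap.coe_smul', Pi.smul_apply, ContinuousLinearMap.coe_comp',
      Function.comp_apply, ContinuousLinearMap.prod_apply, ContinuousLinearMap.coe_id', id_eq,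
      IsBoundedBilinearMap.deriv_apply]
    rw [e1, ← two_smul ℝ, smul_smul]
    norm_num
  have hz1 : z ∈ closedBall z ‖v‖ := mem_closedBall_self (norm_nonneg v)
  have hz2 : z + v ∈ closedBall z ‖v‖ := by simp [dist_eq_norm]
  have hfin := hconv.norm_image_sub_le_of_norm_hasFDerivWithin_le
    (fun y _ => (hh y).hasFDerivWithinAt) key1 hz1 hz2
  have hhz : h z = 0 := by simp [hh_def]
  have hhzv : h (z + v) = g (z + v) - g z - g' z v - (1/2 : ℝ) • (g'' z v v) := by
    simp only [hh_def]
    rw [add_sub_cancel_left]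
  calc ‖g (z + v) - g z - g' z v - (1/2 : ℝ) • (g'' z v v)‖
      = ‖h (z + v) - h z‖ := by rw [hhz, hhzv, sub_zero]
    _ ≤ β * ‖v‖ * ‖v‖ * ‖z + v - z‖ := hfin
    _ = β * ‖v‖ ^ 3 := by rw [show z + v - z = v by abel]; ring
end Taylor

section Deriv
variable {E F : Type*} [NormedAddCommGroup E] [NormedSpace ℝ E]
  [NormedAddCommGroup F] [NormedSpace ℝ F]

lemma itfd3_apply (f : E → F) (x : E) (u v w : E) :
    iteratedFDeriv ℝ 3 f x ![u, v, w] = fderiv ℝ (fderiv ℝ (fderiv ℝ f)) x u v w := by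
  rw [iteratedFDeriv_succ_apply_right, iteratedFDeriv_two_apply]
  rfl

lemma third_deriv_diff_norm_le (f : E → F) (x y : E) {c : ℝ}
    (h : ‖iteratedFDeriv ℝ 3 f x - iteratedFDeriv ℝ 3 f y‖ ≤ c) :
    ‖fderiv ℝ (fderiv ℝ (fderiv ℝ f)) x - fderiv ℝ (fderiv ℝ (fderiv ℝ f)) y‖ ≤ c := by
  have hc : 0 ≤ c := le_trans (norm_nonneg _) h
  refine ContinuousLinearMap.opNorm_le_bound _ hc fun u => ?_
  refine ContinuousLinearMap.opNorm_le_bound _ (by positivity) fun v => ?_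
  refine ContinuousLinearMap.opNorm_le_bound _ (by positivity) fun w => ?_
  have e : fderiv ℝ (fderiv ℝ (fderiv ℝ f)) x u v w - fderiv ℝ (fderiv ℝ (fderiv ℝ f)) y u v w
      = (iteratedFDeriv ℝ 3 f x - iteratedFDeriv ℝ 3 f y) ![u, v, w] := by
    rw [ContinuousMultilinearMap.sub_apply, itfd3_apply, itfd3_apply]
  simp only [ContinuousLinearMap.sub_apply, ContinuousLinearMap.coe_sub', Pi.sub_apply]
  calc ‖fderiv ℝ (fderiv ℝ (fderiv ℝ f)) x u v w - fderiv ℝ (fderiv ℝ (fderiv ℝ f)) y u v w‖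
      = ‖(iteratedFDeriv ℝ 3 f x - iteratedFDeriv ℝ 3 f y) ![u, v, w]‖ := by rw [e]
    _ ≤ ‖iteratedFDeriv ℝ 3 f x - iteratedFDeriv ℝ 3 f y‖ * ∏ i, ‖![u, v, w] i‖ :=
        ContinuousMultilinearMap.le_opNorm _ _
    _ = ‖iteratedFDeriv ℝ 3 f x - iteratedFDeriv ℝ 3 f y‖ * (‖u‖ * ‖v‖ * ‖w‖) := by
        rw [Fin.prod_univ_three]; simp
    _ ≤ c * (‖u‖ * ‖v‖ * ‖w‖) := by
        exact mul_le_mul_of_nonneg_right h (by positivity)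
    _ = c * ‖u‖ * ‖v‖ * ‖w‖ := by ring

lemma third_symm (f : E → F) (hf : ContDiff ℝ 4 f) (z u v w : E) :
    fderiv ℝ (fderiv ℝ (fderiv ℝ f)) z u v w
      = fderiv ℝ (fderiv ℝ (fderiv ℝ f)) z v u w
    ∧ fderiv ℝ (fderiv ℝ (fderiv ℝ f)) z u v w
      = fderiv ℝ (fderiv ℝ (fderiv ℝ f)) z u w v := by
  set g := fderiv ℝ f
  set g' := fderiv ℝ g
  set g'' := fderiv ℝ g'
  have hg3 : ContDiff ℝ 3 g := hf.fderiv_right (by norm_num)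
  have hg'2 : ContDiff ℝ 2 g' := hg3.fderiv_right (by norm_num)
  have hg : ∀ x, HasFDerivAt f (g x) x := fun x =>
    (hf.differentiable (by norm_num) x).hasFDerivAt
  have hg' : ∀ x, HasFDerivAt g (g' x) x := fun x =>
    (hg3.differentiable (by norm_num) x).hasFDerivAt
  have hg'' : ∀ x, HasFDerivAt g' (g'' x) x := fun x =>
    (hg'2.differentiable (by norm_num) x).hasFDerivAt
  constructor
  · exact congrFun (congrArg _ (second_derivative_symmetric hg' (hg'' z) u v)) w
  · -- swap last two slots
    have hsym2 : ∀ x a b, g' x a b = g' x b a := fun x a b =>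
      second_derivative_symmetric hg (hg' x) a b
    have key : ∀ a b : E, g'' z u a b = g'' z u b a := by
      intro a b
      set Φ₁ : (E →L[ℝ] E →L[ℝ] F) →L[ℝ] F :=
        (ContinuousLinearMap.apply ℝ F b).comp (ContinuousLinearMap.apply ℝ (E →L[ℝ] F) a)
      set Φ₂ : (E →L[ℝ] E →L[ℝ] F) →L[ℝ] F :=
        (ContinuousLinearMap.apply ℝ F a).comp (ContinuousLinearMap.apply ℝ (E →L[ℝ] F) b)
      have h1 : HasFDerivAt (fun x => g' x a b) (Φ₁.comp (g'' z)) z := by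
        have h1' := Φ₁.hasFDerivAt.comp (f' := fderiv ℝ g' z) z (hg'' z : HasFDerivAt g' (fderiv ℝ g' z) z)
        exact h1'
      have h2 : HasFDerivAt (fun x => g' x a b) (Φ₂.comp (g'' z)) z := by
        have h2' : HasFDerivAt (fun x => g' x b a) (Φ₂.comp (g'' z)) z := by
          have h2'' := Φ₂.hasFDerivAt.comp (f' := fderiv ℝ g' z) z (hg'' z : HasFDerivAt g' (fderiv ℝ g' z) z)
          exact h2''
        have : (fun x => g' x b a) = fun x => g' x a b := by
          funext x; exact (hsym2 x a b).symm
        rwa [this] at h2'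
      have heq := h1.unique h2
      exact DFunLike.congr_fun heq u
    exact key v w
end Deriv

lemma fderiv_hessTrace {d : ℕ} (L : EuclideanSpace ℝ (Fin d) → ℝ) (hL : ContDiff ℝ 4 L)
    (z : EuclideanSpace ℝ (Fin d)) :
    fderiv ℝ (hessTrace L) z
      = ∑ j : Fin d, fderiv ℝ (fderiv ℝ (fderiv ℝ L)) z (EuclideanSpace.single j 1)
          (EuclideanSpace.single j 1) := by
  set g' := fderiv ℝ (fderiv ℝ L) with hg'def
  set g'' := fderiv ℝ g' with hg''def
  have hg'2 : ContDiff ℝ 2 g' :=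
    (hL.fderiv_right (m := 3) (by norm_num)).fderiv_right (m := 2) (by norm_num)
  have hg'' : ∀ x, HasFDerivAt g' (g'' x) x := fun x =>
    (hg'2.differentiable (by norm_num) x).hasFDerivAt
  have hrepr : hessTrace L = fun x => ∑ j : Fin d,
      g' x (EuclideanSpace.single j 1) (EuclideanSpace.single j 1) := by
    funext x; unfold hessTrace
    exact Finset.sum_congr rfl fun j _ => iteratedFDeriv_two_apply L x _
  set Φ : Fin d → (EuclideanSpace ℝ (Fin d) →L[ℝ] EuclideanSpace ℝ (Fin d) →L[ℝ] ℝ) →L[ℝ] ℝ :=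
    fun j =>
    (ContinuousLinearMap.apply ℝ ℝ (EuclideanSpace.single j 1)).comp
      (ContinuousLinearMap.apply ℝ (EuclideanSpace ℝ (Fin d) →L[ℝ] ℝ) (EuclideanSpace.single j 1))
  have hder : HasFDerivAt (hessTrace L) (∑ j : Fin d, (Φ j).comp (g'' z)) z := by
    rw [hrepr]
    refine HasFDerivAt.fun_sum fun j _ => ?_
    have h1 := (Φ j).hasFDerivAt.comp (f' := fderiv ℝ g' z) z (hg'' z : HasFDerivAt g' (fderiv ℝ g' z) z)
    exact h1
  rw [hder.fderiv]
  refine Finset.sum_congr rfl fun j _ => ?_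
  ext w
  have hs := third_symm L hL z w (EuclideanSpace.single j 1) (EuclideanSpace.single j 1)
  have hs2 := third_symm L hL z (EuclideanSpace.single j 1) w (EuclideanSpace.single j 1)
  show g'' z w (EuclideanSpace.single j 1) (EuclideanSpace.single j 1)
    = g'' z (EuclideanSpace.single j 1) (EuclideanSpace.single j 1) w
  rw [hg''def, hg'def]
  rw [hs.1, hs2.2]

lemma bern_ae {Ω : Type} [MeasurableSpace Ω] (μ : Measure Ω) (f : Ω → ℝ) (hf : Measurable f)
    (σ : ℝ)
    (h : μ.map f = (1 / 2 : ENNReal) • Measure.dirac σ + (1 / 2 : ENNReal) • Measure.dirac (-σ)) :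
    ∀ᵐ ω ∂μ, f ω = σ ∨ f ω = -σ := by
  have hms : MeasurableSet ({σ, -σ} : Set ℝ) := ((Set.finite_singleton (-σ)).insert σ).measurableSet
  have h0 : μ.map f ({σ, -σ} : Set ℝ)ᶜ = 0 := by
    rw [h]
    simp [Measure.dirac_apply' _ hms.compl]
  rw [Measure.map_apply hf hms.compl] at h0
  have : ∀ᵐ ω ∂μ, f ω ∈ ({σ, -σ} : Set ℝ) := by
    rw [MeasureTheory.ae_iff]
    convert h0 using 2
    rfl
  filter_upwards [this] with ω hω
  simpa using hω

lemma integrable_id_half_dirac (a : ℝ) :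
    Integrable (fun x : ℝ => x) ((1 / 2 : ENNReal) • Measure.dirac a) := by
  refine ⟨aestronglyMeasurable_id, ?_⟩
  simp only [HasFiniteIntegral, lintegral_smul_measure, lintegral_dirac]
  exact ENNReal.mul_lt_top (by norm_num) (by simp)

lemma bern_integral {Ω : Type} [MeasurableSpace Ω] (μ : Measure Ω) [IsProbabilityMeasure μ]
    (f : Ω → ℝ) (hf : Measurable f) (σ : ℝ)
    (h : μ.map f = (1 / 2 : ENNReal) • Measure.dirac σ + (1 / 2 : ENNReal) • Measure.dirac (-σ)) :
    ∫ ω, f ω ∂μ = 0 := by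
  have h1 : ∫ ω, f ω ∂μ = ∫ x, x ∂(μ.map f) :=
    (integral_map hf.aemeasurable aestronglyMeasurable_id).symm
  rw [h1, h, integral_add_measure (integrable_id_half_dirac σ) (integrable_id_half_dirac (-σ)),
    integral_smul_measure, integral_smul_measure, integral_dirac, integral_dirac]
  simp

lemma euclid_decomp {d : ℕ} (x : EuclideanSpace ℝ (Fin d)) :
    x = ∑ i : Fin d, x i • EuclideanSpace.single i 1 := by
  ext j
  have : (∑ i : Fin d, x i • EuclideanSpace.single i 1) j
      = ∑ i : Fin d, (x i • EuclideanSpace.single i (1:ℝ)) j := by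
    induction' (Finset.univ : Finset (Fin d)) using Finset.induction with a s ha ih
    · simp
    · rw [Finset.sum_insert ha, Finset.sum_insert ha, ← ih]; rfl
  rw [this]
  simp [EuclideanSpace.single_apply, Finset.sum_ite_eq, mul_comm]

lemma euclid_norm_le {d : ℕ} (x : EuclideanSpace ℝ (Fin d)) {σ : ℝ} (hσ : 0 ≤ σ)
    (h : ∀ i, x i = σ ∨ x i = -σ) : ‖x‖ ≤ Real.sqrt d * σ := by
  rw [EuclideanSpace.norm_eq]
  have : ∀ i, ‖x i‖ ^ 2 = σ ^ 2 := by
    intro i; rcases h i with h | h <;> rw [h] <;> simp [Real.norm_eq_abs, sq_abs, neg_pow]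
  calc Real.sqrt (∑ i, ‖x i‖ ^ 2) = Real.sqrt (d * σ ^ 2) := by
        rw [Finset.sum_congr rfl fun i _ => this i]; simp [Finset.sum_const, mul_comm]
    _ ≤ Real.sqrt d * σ := by
        rw [Real.sqrt_mul (by positivity), Real.sqrt_sq hσ]

set_option maxHeartbeats 3200000 in
/-- **Implicit bias of Bernoulli perturbation.**  For `L : ℝ^d → ℝ` with continuous
fourth-order partial derivatives and `β`-Lipschitz third-order derivatives, there is a
constant `C > 0` depending only on `d` and `β` such that for every random vector `ξ` with
independent coordinates taking the values `σ` and `-σ` each with probability `1/2`, and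
every `z`, the expected gradient of the shifted loss satisfies
`‖E[∇L(z+ξ)] - ∇L(z) - (σ²/2) ∇(tr ∇²L)(z)‖ ≤ C σ³`. -/
theorem expected_gradient_of_shifted_loss (d : ℕ) (β : ℝ) (hβ : 0 < β) :
    ∃ C : ℝ, 0 < C ∧
      ∀ (L : EuclideanSpace ℝ (Fin d) → ℝ),
        ContDiff ℝ 4 L →
        (∀ x y, ‖iteratedFDeriv ℝ 3 L x - iteratedFDeriv ℝ 3 L y‖ ≤ β * ‖x - y‖) →
        ∀ (Ω : Type) [MeasurableSpace Ω] (μ : Measure Ω) [IsProbabilityMeasure μ]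
          (σ : ℝ), 0 ≤ σ →
        ∀ (ξ : Ω → EuclideanSpace ℝ (Fin d)),
          Measurable ξ →
          iIndepFun (fun (i : Fin d) (ω : Ω) => ξ ω i) μ →
          (∀ i : Fin d, μ.map (fun ω => ξ ω i)
            = (1 / 2 : ENNReal) • Measure.dirac σ + (1 / 2 : ENNReal) • Measure.dirac (-σ)) →
        ∀ z : EuclideanSpace ℝ (Fin d),
          ‖(∫ ω, gradient L (z + ξ ω) ∂μ) - gradient L z
              - (σ ^ 2 / 2) • gradient (hessTrace L) z‖ ≤ C * σ ^ 3 := by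
  refine ⟨β * Real.sqrt d ^ 3 + 1, by positivity, ?_⟩
  intro L hL hLip Ω _ μ _ σ hσ ξ hξ hind hmap z
  set g := fderiv ℝ L with hgdef
  set g' := fderiv ℝ g with hg'def
  set g'' := fderiv ℝ g' with hg''def
  have hg3 : ContDiff ℝ 3 g := hL.fderiv_right (m := 3) (by norm_num)
  have hg'2 : ContDiff ℝ 2 g' := hg3.fderiv_right (m := 2) (by norm_num)
  have hg''1 : ContDiff ℝ 1 g'' := hg'2.fderiv_right (m := 1) (by norm_num)
  have hg : ∀ x, HasFDerivAt g (g' x) x := fun x =>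
    (hg3.differentiable (by norm_num) x).hasFDerivAt
  have hg' : ∀ x, HasFDerivAt g' (g'' x) x := fun x =>
    (hg'2.differentiable (by norm_num) x).hasFDerivAt
  have hg''lip : ∀ x y, ‖g'' x - g'' y‖ ≤ β * ‖x - y‖ := fun x y =>
    third_deriv_diff_norm_le L x y (hLip x y)
  -- coordinates
  have hξi : ∀ i, Measurable fun ω => ξ ω i := fun i => (measurable_pi_apply i).comp ((WithLp.measurable_ofLp 2 _).comp hξ)
  have hae : ∀ᵐ ω ∂μ, ∀ i, ξ ω i = σ ∨ ξ ω i = -σ := by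
    rw [MeasureTheory.ae_all_iff]
    exact fun i => bern_ae μ _ (hξi i) σ (hmap i)
  have hnorm : ∀ᵐ ω ∂μ, ‖ξ ω‖ ≤ Real.sqrt d * σ := by
    filter_upwards [hae] with ω hω
    exact euclid_norm_le (ξ ω) hσ hω
  have habs : ∀ᵐ ω ∂μ, ∀ i, ‖ξ ω i‖ ≤ σ := by
    filter_upwards [hae] with ω hω i
    rcases hω i with h | h <;> rw [h] <;> simp [Real.norm_eq_abs, abs_of_nonneg hσ]
  have hξi_int : ∀ i, Integrable (fun ω => ξ ω i) μ := by
    intro i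
    refine ⟨(hξi i).aestronglyMeasurable, HasFiniteIntegral.of_bounded (C := σ) ?_⟩
    filter_upwards [habs] with ω hω using hω i
  have hξij_int : ∀ i j, Integrable (fun ω => ξ ω i * ξ ω j) μ := by
    intro i j
    refine ⟨((hξi i).mul (hξi j)).aestronglyMeasurable,
      HasFiniteIntegral.of_bounded (C := σ * σ) ?_⟩
    filter_upwards [habs] with ω hω
    calc ‖ξ ω i * ξ ω j‖ = ‖ξ ω i‖ * ‖ξ ω j‖ := by rw [norm_mul]
      _ ≤ σ * σ := mul_le_mul (hω i) (hω j) (norm_nonneg _) hσ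
  have hExi : ∀ i, ∫ ω, ξ ω i ∂μ = 0 := fun i => bern_integral μ _ (hξi i) σ (hmap i)
  have hExij : ∀ i j, i ≠ j → ∫ ω, ξ ω i * ξ ω j ∂μ = 0 := by
    intro i j hij
    have hIF : IndepFun (fun ω => ξ ω i) (fun ω => ξ ω j) μ := hind.indepFun hij
    rw [show (fun ω => ξ ω i * ξ ω j) = (fun ω => ξ ω i) * (fun ω => ξ ω j) from rfl,
      hIF.integral_mul_eq_mul_integral ((hξi i).aestronglyMeasurable) ((hξi j).aestronglyMeasurable),
      hExi i, zero_mul]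
  have hExii : ∀ i, ∫ ω, ξ ω i * ξ ω i ∂μ = σ ^ 2 := by
    intro i
    have : (fun ω => ξ ω i * ξ ω i) =ᵐ[μ] fun _ => σ ^ 2 := by
      filter_upwards [hae] with ω hω
      rcases hω i with h | h <;> rw [h] <;> ring
    rw [integral_congr_ae this, integral_const]
    simp
  -- Taylor remainder
  set R : Ω → EuclideanSpace ℝ (Fin d) →L[ℝ] ℝ := fun ω =>
    g (z + ξ ω) - g z - g' z (ξ ω) - (1/2 : ℝ) • (g'' z (ξ ω) (ξ ω)) with hRdef
  have hRbound : ∀ᵐ ω ∂μ, ‖R ω‖ ≤ β * (Real.sqrt d * σ) ^ 3 := by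
    filter_upwards [hnorm] with ω hω
    refine le_trans (taylor2_bound g g' g'' hβ.le hg hg' hg''lip z (ξ ω)) ?_
    have h3 : ‖ξ ω‖ ^ 3 ≤ (Real.sqrt d * σ) ^ 3 := by
      exact pow_le_pow_left₀ (norm_nonneg _) hω 3
    exact mul_le_mul_of_nonneg_left h3 hβ.le
  -- integrability of the pieces
  have hint1 : Integrable (fun ω => g (z + ξ ω)) μ := by
    have hmeas : AEStronglyMeasurable (fun ω => g (z + ξ ω)) μ :=
      (hg3.continuous.measurable.comp ((continuous_add_left z).measurable.comp hξ)).aestronglyMeasurable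
    obtain ⟨M, hM⟩ := (isCompact_closedBall z (Real.sqrt d * σ)).exists_bound_of_continuousOn
      hg3.continuous.continuousOn
    refine ⟨hmeas, HasFiniteIntegral.of_bounded (C := M) ?_⟩
    filter_upwards [hnorm] with ω hω
    refine hM _ ?_
    simp only [mem_closedBall, dist_eq_norm, add_sub_cancel_left]
    exact hω
  have hξ_int : Integrable ξ μ :=
    ⟨hξ.aestronglyMeasurable, HasFiniteIntegral.of_bounded hnorm⟩
  have hint_lin : Integrable (fun ω => g' z (ξ ω)) μ := (g' z).integrable_comp hξ_int
  have hint_quad : Integrable (fun ω => g'' z (ξ ω) (ξ ω)) μ := by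
    have hc : Continuous fun p : EuclideanSpace ℝ (Fin d) × EuclideanSpace ℝ (Fin d) =>
        g'' z p.1 p.2 := (g'' z).isBoundedBilinearMap.continuous
    refine ⟨(hc.measurable.comp (hξ.prodMk hξ)).aestronglyMeasurable,
      HasFiniteIntegral.of_bounded
        (C := ‖g'' z‖ * (Real.sqrt d * σ) * (Real.sqrt d * σ)) ?_⟩
    filter_upwards [hnorm] with ω hω
    calc ‖g'' z (ξ ω) (ξ ω)‖ ≤ ‖g'' z‖ * ‖ξ ω‖ * ‖ξ ω‖ := (g'' z).le_opNorm₂ _ _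
      _ ≤ ‖g'' z‖ * (Real.sqrt d * σ) * (Real.sqrt d * σ) := by
          have h2 : (0:ℝ) ≤ Real.sqrt d * σ := by positivity
          gcongr
  have hint_quad' : Integrable (fun ω => (1/2 : ℝ) • (g'' z (ξ ω) (ξ ω))) μ :=
    hint_quad.smul ((1:ℝ)/2)
  have hint_R : Integrable R μ :=
    ((hint1.sub (integrable_const _)).sub hint_lin).sub hint_quad'
  -- integral identities
  set ev : Fin d → EuclideanSpace ℝ (Fin d) := fun j => EuclideanSpace.single j 1 with hevdef
  have Ilin : ∫ ω, g' z (ξ ω) ∂μ = 0 := by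
    have hrw : ∀ ω, g' z (ξ ω) = ∑ i, ξ ω i • (g' z (ev i)) := by
      intro ω
      conv_lhs => rw [euclid_decomp (ξ ω)]
      rw [map_sum]
      exact Finset.sum_congr rfl fun i _ => by rw [_root_.map_smul]
    simp_rw [hrw]
    rw [integral_finset_sum _ fun i _ => (hξi_int i).smul_const _]
    refine Finset.sum_eq_zero fun i _ => ?_
    rw [integral_smul_const, hExi i, zero_smul]
  set T : EuclideanSpace ℝ (Fin d) →L[ℝ] ℝ := ∑ j, g'' z (ev j) (ev j) with hTdef
  have Iquad : ∫ ω, g'' z (ξ ω) (ξ ω) ∂μ = σ ^ 2 • T := by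
    have hrw : ∀ ω, g'' z (ξ ω) (ξ ω)
        = ∑ i, ∑ j, (ξ ω i * ξ ω j) • (g'' z (ev i) (ev j)) := by
      intro ω
      conv_lhs => rw [euclid_decomp (ξ ω)]
      simp only [_root_.map_sum, _root_.map_smul, ContinuousLinearMap.sum_apply,
        ContinuousLinearMap.smul_apply, Finset.smul_sum, smul_smul]
      rw [Finset.sum_comm]
      exact Finset.sum_congr rfl fun i _ => Finset.sum_congr rfl fun j _ => by rw [mul_comm]
    simp_rw [hrw]
    rw [integral_finset_sum _ fun i _ =>
      integrable_finset_sum _ fun j _ => (hξij_int i j).smul_const _]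
    have hinner : ∀ i, ∫ ω, ∑ j, (ξ ω i * ξ ω j) • (g'' z (ev i) (ev j)) ∂μ
        = σ ^ 2 • (g'' z (ev i) (ev i)) := by
      intro i
      rw [integral_finset_sum _ fun j _ => (hξij_int i j).smul_const _]
      rw [Finset.sum_eq_single i]
      · rw [integral_smul_const, hExii i]
      · intro j _ hji
        rw [integral_smul_const, hExij i j (Ne.symm hji), zero_smul]
      · intro h; exact absurd (Finset.mem_univ i) h
    rw [Finset.sum_congr rfl fun i _ => hinner i, ← Finset.smul_sum, hTdef]
  -- splitting the integral
  have Itot : ∫ ω, g (z + ξ ω) ∂μ = (∫ ω, R ω ∂μ) + (g z + (σ ^ 2 / 2) • T) := by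
    have h1 : ∫ ω, g (z + ξ ω) ∂μ = ∫ ω, (R ω
        + (g z + (g' z (ξ ω) + (1/2 : ℝ) • (g'' z (ξ ω) (ξ ω))))) ∂μ := by
      refine integral_congr_ae (Filter.Eventually.of_forall fun ω => ?_)
      simp only [hRdef]
      abel
    have hint3 : Integrable (fun ω => g' z (ξ ω) + (1/2 : ℝ) • (g'' z (ξ ω) (ξ ω))) μ :=
      Integrable.fun_add (ε' := EuclideanSpace ℝ (Fin d) →L[ℝ] ℝ) hint_lin hint_quad'
    have hint2 : Integrable (fun ω => g z
        + (g' z (ξ ω) + (1/2 : ℝ) • (g'' z (ξ ω) (ξ ω)))) μ :=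
      Integrable.fun_add (ε' := EuclideanSpace ℝ (Fin d) →L[ℝ] ℝ) (integrable_const (g z)) hint3
    rw [h1, integral_add hint_R hint2, integral_add (integrable_const (g z)) hint3,
      integral_add hint_lin hint_quad', integral_const, integral_smul, Ilin, Iquad]
    have h2 : (1/2 : ℝ) • (σ ^ 2 • T) = (σ ^ 2 / 2) • T := by
      rw [smul_smul]
      congr 1
      ring
    rw [h2]
    simp [measure_univ]
  -- convert gradients to fderivs
  have hT' : fderiv ℝ (hessTrace L) z = T := by
    rw [fderiv_hessTrace L hL z]
  set e := (InnerProductSpace.toDual ℝ (EuclideanSpace ℝ (Fin d))).symm with hedef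
  have hgrad : ∀ x, gradient L x = e (g x) := fun x => rfl
  have hgradH : gradient (hessTrace L) z = e T := by rw [← hT']; rfl
  have hmain : (∫ ω, gradient L (z + ξ ω) ∂μ) - gradient L z
      - (σ ^ 2 / 2) • gradient (hessTrace L) z = e (∫ ω, R ω ∂μ) := by
    have h1 : (∫ ω, gradient L (z + ξ ω) ∂μ) = e (∫ ω, g (z + ξ ω) ∂μ) := by
      simp_rw [hgrad]
      exact e.toLinearIsometry.integral_comp_comm (fun ω => g (z + ξ ω))
    rw [h1, hgrad, hgradH, Itot, ← e.map_smul, ← e.map_sub, ← e.map_sub]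
    congr 1
    abel
  rw [hmain, e.norm_map]
  have hfin : ‖∫ ω, R ω ∂μ‖ ≤ β * (Real.sqrt d * σ) ^ 3 * (μ Set.univ).toReal :=
    norm_integral_le_of_norm_le_const hRbound
  rw [measure_univ] at hfin
  simp only [ENNReal.toReal_one, mul_one] at hfin
  calc ‖∫ ω, R ω ∂μ‖ ≤ β * (Real.sqrt d * σ) ^ 3 := hfin
    _ = β * Real.sqrt d ^ 3 * σ ^ 3 := by ring
    _ ≤ (β * Real.sqrt d ^ 3 + 1) * σ ^ 3 := by nlinarith [pow_nonneg hσ 3]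
end
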